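/- arXiv:1907.05656 — 8 statements merged into one kernel-verified Lean document; each statement's English description precedes it below -/
import Mathlib

section
/- Let g be an n-dimensional filiform Lie algebra with adapted basis {e_1,…,e_n}. Then for all indices i, j with 1 < i < z_1 and j > 1, the bracket [e_i, e_j] = 0, where z_1 = min{k ≥ 4 : [e_k, e_n] ≠ 0}. -/
/-- A complex Lie algebra `L` of dimension `n` is filiform if its lower central series
`C^1 g = g`, `C^k g = ⁅C^{k-1} g, g⁆` (here `C^k g = LieModule.lowerCentralSeries ℂ L L (k-1)`)
satisfies `dim C^k g = n - k` for all `2 ≤ k ≤ n`. -/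
def IsFiliform (L : Type*) [LieRing L] [LieAlgebra ℂ L] (n : ℕ) : Prop :=
  Module.finrank ℂ L = n ∧
    ∀ k : ℕ, 2 ≤ k → k ≤ n →
      Module.finrank ℂ (LieModule.lowerCentralSeries ℂ L L (k - 1)) = n - k

/-- An adapted basis `e_1, …, e_n` of an `n`-dimensional filiform Lie algebra:
`⁅e_1, e_h⁆ = e_{h-1}` for `3 ≤ h ≤ n`, `⁅e_2, e_h⁆ = 0` for `1 ≤ h ≤ n`, and
`⁅e_3, e_h⁆ = 0` for `2 ≤ h ≤ n`.  The family `e` is indexed by `ℕ`, with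
`e 1, …, e n` the members of the basis `b`. -/
structure AdaptedBasis (n : ℕ) (L : Type*) [LieRing L] [LieAlgebra ℂ L] where
  b : Module.Basis (Fin n) ℂ L
  e : ℕ → L
  he : ∀ i : Fin n, e (i.1 + 1) = b i
  adapted1 : ∀ h, 3 ≤ h → h ≤ n → ⁅e 1, e h⁆ = e (h - 1)
  adapted2 : ∀ h, 1 ≤ h → h ≤ n → ⁅e 2, e h⁆ = 0
  adapted3 : ∀ h, 2 ≤ h → h ≤ n → ⁅e 3, e h⁆ = 0

/-!
Bracketing `⁅e_i, e_{j+1}⁆` with `e_1` and applying the Leibniz rule gives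
`⁅e_1, ⁅e_i, e_{j+1}⁆⁆ = ⁅e_{i-1}, e_{j+1}⁆ + ⁅e_i, e_j⁆`. So if `e_{i-1}` centralizes
`e_2, …, e_n` and `⁅e_i, e_n⁆ = 0`, a descending induction on `j` shows that `e_i` centralizes
`e_2, …, e_n` as well. Starting from `e_2` and `e_3`, which do so by adaptedness, an ascending
induction on `i` reaches every `i < z_1`, since `⁅e_i, e_n⁆ = 0` for `4 ≤ i < z_1`.
-/

namespace AdaptedBasis

variable {n : ℕ} {L : Type*} [LieRing L] [LieAlgebra ℂ L] (B : AdaptedBasis n L)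

theorem bracket_eq_zero_of_bracket_succ_eq_zero {i j : ℕ} (hi : 3 ≤ i) (hin : i ≤ n)
    (hj : 2 ≤ j) (hjn : j < n) (hsucc : ⁅B.e i, B.e (j + 1)⁆ = 0)
    (hpred : ⁅B.e (i - 1), B.e (j + 1)⁆ = 0) : ⁅B.e i, B.e j⁆ = 0 := by
  have hleibniz := leibniz_lie (B.e 1) (B.e i) (B.e (j + 1))
  rw [B.adapted1 (j + 1) (by omega) hjn, B.adapted1 i hi hin, hsucc, hpred,
    Nat.add_sub_cancel] at hleibniz
  simpa using hleibniz.symm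

theorem bracket_eq_zero_of_pred {i : ℕ} (hi : 3 ≤ i) (hin : i ≤ n)
    (hlast : ⁅B.e i, B.e n⁆ = 0)
    (hpred : ∀ j, 2 ≤ j → j ≤ n → ⁅B.e (i - 1), B.e j⁆ = 0) :
    ∀ j, 2 ≤ j → j ≤ n → ⁅B.e i, B.e j⁆ = 0 := by
  intro j hj hjn
  induction hjn using Nat.decreasingInduction with
  | self => exact hlast
  | of_succ k hkn ih =>
    exact B.bracket_eq_zero_of_bracket_succ_eq_zero hi hin hj hkn (ih (by omega))
      (hpred (k + 1) (by omega) hkn)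

theorem bracket_eq_zero_of_forall_bracket_last_eq_zero {i : ℕ} (hi : 2 ≤ i) (hin : i ≤ n)
    (hvanish : ∀ k, 4 ≤ k → k ≤ i → ⁅B.e k, B.e n⁆ = 0) :
    ∀ j, 2 ≤ j → j ≤ n → ⁅B.e i, B.e j⁆ = 0 := by
  obtain rfl | hi3 : i = 2 ∨ 3 ≤ i := by omega
  · exact fun j hj hjn ↦ B.adapted2 j (by omega) hjn
  induction i, hi3 using Nat.le_induction with
  | base => exact B.adapted3
  | succ i hi3 ih =>
    exact B.bracket_eq_zero_of_pred (by omega) hin (hvanish (i + 1) (by omega) le_rfl)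
      (ih (by omega) (by omega) fun k hk hki ↦ hvanish k hk (by omega))

end AdaptedBasis

theorem bracket_eq_zero_of_lt_z1_general
    (n : ℕ) (L : Type*) [LieRing L] [LieAlgebra ℂ L] (B : AdaptedBasis n L)
    (hnonmodel : ∃ k, 4 ≤ k ∧ k ≤ n ∧ ⁅B.e k, B.e n⁆ ≠ 0) :
    ∀ i j : ℕ, 1 < i → i < sInf {k | 4 ≤ k ∧ ⁅B.e k, B.e n⁆ ≠ 0} → 1 < j → j ≤ n →
      ⁅B.e i, B.e j⁆ = 0 := by
  set S : Set ℕ := {k | 4 ≤ k ∧ ⁅B.e k, B.e n⁆ ≠ 0}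
  intro i j hi hiz hj hjn
  obtain ⟨k, hk4, hkn, hk⟩ := hnonmodel
  have hSn : sInf S ≤ n := (Nat.sInf_le (show k ∈ S from ⟨hk4, hk⟩)).trans hkn
  refine B.bracket_eq_zero_of_forall_bracket_last_eq_zero hi (by omega) (fun m hm hmi ↦ ?_)
    j hj hjn
  by_contra hne
  exact Nat.notMem_of_lt_sInf (hmi.trans_lt hiz) ⟨hm, hne⟩

/-- Let `g` be an `n`-dimensional non-model filiform Lie algebra with adapted basis
`e_1, …, e_n` and `z_1 = min {k ≥ 4 : ⁅e_k, e_n⁆ ≠ 0}`.  Then `⁅e_i, e_j⁆ = 0` for all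
`1 < i < z_1` and `j > 1`. -/
theorem bracket_eq_zero_of_lt_z1
    (n : ℕ) (L : Type*) [LieRing L] [LieAlgebra ℂ L] (hn : 5 ≤ n)
    (hfil : IsFiliform L n) (B : AdaptedBasis n L)
    (hnonmodel : ∃ k, 4 ≤ k ∧ k ≤ n ∧ ⁅B.e k, B.e n⁆ ≠ 0) :
    ∀ i j : ℕ, 1 < i → i < sInf {k | 4 ≤ k ∧ ⁅B.e k, B.e n⁆ ≠ 0} → 1 < j → j ≤ n →
      ⁅B.e i, B.e j⁆ = 0 :=
  bracket_eq_zero_of_lt_z1_general n L B hnonmodel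
end

section
/- For any n-dimensional non-model filiform Lie algebra g, the invariants satisfy 4 ≤ z_1 ≤ z_2 < n ≤ 2 z_2 − 2, where z_1 = min{k ≥ 4 : [e_k, e_n] ≠ 0} and z_2 = min{k ≥ 4 : [e_k, e_{k+1}] ≠ 0} for an adapted basis {e_1,…,e_n}. -/
/-!
Since `ad e₁` is a derivation lowering indices,
`⁅e₁, ⁅e_{i+1}, e_{j+1}⁆⁆ = ⁅e_i, e_{j+1}⁆ + ⁅e_{i+1}, e_j⁆`. So if `⁅e_k, e_n⁆ = 0` for all
`k ≤ K`, descending in the second index gives `⁅e_k, e_j⁆ = 0` for all `k ≤ K`; with `K = z₂`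
this forces `z₁ ≤ z₂`. If all `⁅e_k, e_{k+1}⁆` vanish, ascending in `j - i` kills every bracket,
so a non-model algebra has `z₂ < n`. Finally `e_k ∈ C^{n-k+1} g`, `⁅C^a g, C^b g⁆ ⊆ C^{a+b} g`
and `C^n g = 0` give `⁅e_i, e_j⁆ = 0` whenever `i + j ≤ n + 2`, whence `n + 2 < 2 z₂ + 1`.
-/

namespace LieAlgebra

variable {R L : Type*} [CommRing R] [LieRing L] [LieAlgebra R L]

open LieModule in
theorem lie_mem_lowerCentralSeries_add {a b : ℕ} {x y : L}
    (hx : x ∈ lowerCentralSeries R L L a) (hy : y ∈ lowerCentralSeries R L L b) :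
    ⁅x, y⁆ ∈ lowerCentralSeries R L L (a + b + 1) := by
  induction b generalizing a x y with
  | zero =>
    rw [← lie_skew, add_zero, lowerCentralSeries_succ]
    exact neg_mem (LieSubmodule.lie_mem_lie (LieSubmodule.mem_top y) hx)
  | succ b ih =>
    rw [lowerCentralSeries_succ, ← LieSubmodule.mem_toSubmodule,
      LieSubmodule.lieIdeal_oper_eq_linear_span'] at hy
    rw [← LieSubmodule.mem_toSubmodule]
    induction hy using Submodule.span_induction with
    | mem _ hz =>
      obtain ⟨z, -, w, hw, rfl⟩ := hz
      have hxz : ⁅x, z⁆ ∈ lowerCentralSeries R L L (a + 1) := by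
        rw [← lie_skew, lowerCentralSeries_succ]
        exact neg_mem (LieSubmodule.lie_mem_lie (LieSubmodule.mem_top z) hx)
      have hzxw : ⁅z, ⁅x, w⁆⁆ ∈ lowerCentralSeries R L L (a + b + 1 + 1) := by
        rw [lowerCentralSeries_succ]
        exact LieSubmodule.lie_mem_lie (LieSubmodule.mem_top z) (ih hx hw)
      rw [leibniz_lie]
      refine add_mem ?_ hzxw
      have hxzw := ih hxz hw
      rwa [show a + 1 + b + 1 = a + (b + 1) + 1 by omega] at hxzw
    | zero => simp
    | add _ _ _ _ hu hv => rw [lie_add]; exact add_mem hu hv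
    | smul c _ _ hu => rw [lie_smul]; exact Submodule.smul_mem _ c hu

end LieAlgebra

theorem IsFiliform.lowerCentralSeries_eq_bot {L : Type*} [LieRing L] [LieAlgebra ℂ L] {n : ℕ}
    (hfil : IsFiliform L n) (hn : 2 ≤ n) {m : ℕ} (hm : n - 1 ≤ m) :
    LieModule.lowerCentralSeries ℂ L L m = ⊥ := by
  have : FiniteDimensional ℂ L := .of_finrank_pos (by rw [hfil.1]; omega)
  have hlast := hfil.2 n hn le_rfl
  rw [Nat.sub_self] at hlast
  have hbot : (LieModule.lowerCentralSeries ℂ L L (n - 1) : Submodule ℂ L) = ⊥ :=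
    Submodule.finrank_eq_zero.1 hlast
  rw [eq_bot_iff, ← (LieSubmodule.toSubmodule_eq_bot _).1 hbot]
  exact LieModule.antitone_lowerCentralSeries ℂ L L hm

namespace AdaptedBasis

variable {n : ℕ} {L : Type*} [LieRing L] [LieAlgebra ℂ L] (B : AdaptedBasis n L)

theorem e_mem_lowerCentralSeries {l m : ℕ} (hl : 2 ≤ l) (hlm : l + m ≤ n) :
    B.e l ∈ LieModule.lowerCentralSeries ℂ L L m := by
  induction m generalizing l with
  | zero => exact LieSubmodule.mem_top _
  | succ m ih =>
    have hl1 := B.adapted1 (l + 1) (by omega) (by omega)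
    rw [Nat.add_sub_cancel] at hl1
    rw [← hl1, LieModule.lowerCentralSeries_succ]
    exact LieSubmodule.lie_mem_lie (LieSubmodule.mem_top _) (ih (by omega) (by omega))

theorem lie_e_eq_zero_of_add_le (hfil : IsFiliform L n) {i j : ℕ} (hi : 2 ≤ i) (hj : 2 ≤ j)
    (hij : i + j ≤ n + 2) : ⁅B.e i, B.e j⁆ = 0 := by
  have hmem := LieAlgebra.lie_mem_lowerCentralSeries_add
    (B.e_mem_lowerCentralSeries hi (m := n - i) (by omega))
    (B.e_mem_lowerCentralSeries hj (m := n - j) (by omega))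
  rwa [hfil.lowerCentralSeries_eq_bot (by omega) (by omega), LieSubmodule.mem_bot] at hmem

theorem lie_e_eq_zero_of_lt_four {i j : ℕ} (hi : 2 ≤ i) (hi4 : i < 4) (hj : 2 ≤ j)
    (hjn : j ≤ n) : ⁅B.e i, B.e j⁆ = 0 := by
  interval_cases i
  · exact B.adapted2 j (by omega) hjn
  · exact B.adapted3 j hj hjn

theorem lie_e_one_lie_e {i j : ℕ} (hi : 2 ≤ i) (hin : i < n) (hj : 2 ≤ j) (hjn : j < n) :
    ⁅B.e 1, ⁅B.e (i + 1), B.e (j + 1)⁆⁆ = ⁅B.e i, B.e (j + 1)⁆ + ⁅B.e (i + 1), B.e j⁆ := by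
  rw [leibniz_lie, B.adapted1 (i + 1) (by omega) hin, B.adapted1 (j + 1) (by omega) hjn,
    Nat.add_sub_cancel, Nat.add_sub_cancel]

theorem lie_e_eq_zero_of_lie_e_last {K : ℕ} (hK : ∀ k, 4 ≤ k → k ≤ K → ⁅B.e k, B.e n⁆ = 0)
    {i j : ℕ} (hi : 2 ≤ i) (hiK : i ≤ K) (hin : i ≤ n) (hj : 2 ≤ j) (hjn : j ≤ n) :
    ⁅B.e i, B.e j⁆ = 0 := by
  obtain ⟨d, rfl⟩ : ∃ d, j = n - d := ⟨n - j, by omega⟩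
  induction d generalizing i with
  | zero =>
    rcases lt_or_ge i 4 with hi4 | hi4
    · exact B.lie_e_eq_zero_of_lt_four hi hi4 hj hjn
    · exact hK i hi4 hiK
  | succ d ih =>
    rcases lt_or_ge i 4 with hi4 | hi4
    · exact B.lie_e_eq_zero_of_lt_four hi hi4 hj hjn
    obtain ⟨i, rfl⟩ : ∃ i', i = i' + 1 := ⟨i - 1, by omega⟩
    have hstep :=
      B.lie_e_one_lie_e (i := i) (j := n - (d + 1)) (by omega) (by omega) hj (by omega)
    rwa [show n - (d + 1) + 1 = n - d by omega, ih hi hiK hin (by omega) (by omega),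
      ih (by omega) (by omega) (by omega) (by omega) (by omega), lie_zero, zero_add,
      eq_comm] at hstep

theorem lie_e_eq_zero_of_lie_e_succ (h : ∀ k, 4 ≤ k → k < n → ⁅B.e k, B.e (k + 1)⁆ = 0)
    {i d : ℕ} (hi : 2 ≤ i) (hid : i + d ≤ n) : ⁅B.e i, B.e (i + d)⁆ = 0 := by
  induction d using Nat.strong_induction_on generalizing i with
  | _ d ih =>
    rcases d with _ | _ | d
    · exact lie_self _
    · rcases lt_or_ge i 4 with hi4 | hi4
      · exact B.lie_e_eq_zero_of_lt_four hi hi4 (by omega) hid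
      · exact h i hi4 (by omega)
    have hstep := B.lie_e_one_lie_e hi (by omega) (j := i + d + 1) (by omega) (by omega)
    have h₁ : ⁅B.e (i + 1), B.e (i + d + 1 + 1)⁆ = 0 := by
      simpa only [show i + 1 + (d + 1) = i + d + 1 + 1 by omega] using
        ih (d + 1) (by omega) (i := i + 1) (by omega) (by omega)
    have h₂ : ⁅B.e (i + 1), B.e (i + d + 1)⁆ = 0 := by
      simpa only [show i + 1 + d = i + d + 1 by omega] using
        ih d (by omega) (i := i + 1) (by omega) (by omega)
    rwa [h₁, h₂, lie_zero, add_zero, eq_comm] at hstep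

end AdaptedBasis

/-- For any `n`-dimensional non-model filiform Lie algebra with adapted basis
`e_1, …, e_n`, the invariants `z_1 = min {k ≥ 4 : ⁅e_k, e_n⁆ ≠ 0}` and
`z_2 = min {k ≥ 4 : ⁅e_k, e_{k+1}⁆ ≠ 0}` satisfy `4 ≤ z_1 ≤ z_2 < n ≤ 2 z_2 - 2`. -/
theorem invariants_inequalities
    (n : ℕ) (L : Type*) [LieRing L] [LieAlgebra ℂ L]
    (hfil : IsFiliform L n) (B : AdaptedBasis n L)
    (hnonmodel : ∃ i j, 2 ≤ i ∧ i < j ∧ j ≤ n ∧ ⁅B.e i, B.e j⁆ ≠ 0) :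
    4 ≤ sInf {k | 4 ≤ k ∧ ⁅B.e k, B.e n⁆ ≠ 0} ∧
    sInf {k | 4 ≤ k ∧ ⁅B.e k, B.e n⁆ ≠ 0} ≤ sInf {k | 4 ≤ k ∧ ⁅B.e k, B.e (k + 1)⁆ ≠ 0} ∧
    sInf {k | 4 ≤ k ∧ ⁅B.e k, B.e (k + 1)⁆ ≠ 0} < n ∧
    n ≤ 2 * sInf {k | 4 ≤ k ∧ ⁅B.e k, B.e (k + 1)⁆ ≠ 0} - 2 := by
  obtain ⟨i, j, hi, hij, hjn, hne⟩ := hnonmodel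
  set Z₁ := {k | 4 ≤ k ∧ ⁅B.e k, B.e n⁆ ≠ 0}
  set Z₂ := {k | 4 ≤ k ∧ ⁅B.e k, B.e (k + 1)⁆ ≠ 0}
  obtain ⟨k₂, hk₂, hk₂n⟩ : ∃ k ∈ Z₂, k < n := by
    by_contra! h
    have hzero := B.lie_e_eq_zero_of_lie_e_succ (fun k hk hkn => by_contra fun hk' =>
      (h k ⟨hk, hk'⟩).not_gt hkn) hi (d := j - i) (by omega)
    exact hne (by rwa [Nat.add_sub_cancel' hij.le] at hzero)
  obtain ⟨hz₂, hz₂ne⟩ : sInf Z₂ ∈ Z₂ := Nat.sInf_mem ⟨k₂, hk₂⟩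
  have hz₂n : sInf Z₂ < n := (Nat.sInf_le hk₂).trans_lt hk₂n
  obtain ⟨k₁, hk₁, hk₁z₂⟩ : ∃ k ∈ Z₁, k ≤ sInf Z₂ := by
    by_contra! h
    exact hz₂ne (B.lie_e_eq_zero_of_lie_e_last (fun k hk hkz => by_contra fun hk' =>
      (h k ⟨hk, hk'⟩).not_ge hkz) (by omega) le_rfl hz₂n.le (by omega) hz₂n)
  refine ⟨(Nat.sInf_mem ⟨k₁, hk₁⟩).1, (Nat.sInf_le hk₁).trans hk₁z₂, hz₂n, ?_⟩
  by_contra! hlt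
  exact hz₂ne (B.lie_e_eq_zero_of_add_le hfil (by omega) (by omega) (by omega))
end

section
/- Let g be an n-dimensional non-model filiform Lie algebra with invariant z_2. Then z_2 ≤ n − 1, and z_2 = n − 1 if and only if g is metabelian (i.e. D^2 g = 0). -/
namespace AdaptedBasis

open LieAlgebra Submodule

variable {n : ℕ} {L : Type*} [LieRing L] [LieAlgebra ℂ L] (B : AdaptedBasis n L)

lemma lie_e_one_e_succ {i : ℕ} (hi : 2 ≤ i) (hin : i < n) : ⁅B.e 1, B.e (i + 1)⁆ = B.e i :=
  B.adapted1 (i + 1) (by omega) hin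

theorem lie_eq_zero_of_le_of_lie_succ_eq_zero {m : ℕ} (hm : m ≤ n + 1)
    (h : ∀ k, 4 ≤ k → k + 1 < m → ⁅B.e k, B.e (k + 1)⁆ = 0) {i j : ℕ} (hi : 2 ≤ i) (hij : i ≤ j)
    (hj : j < m) : ⁅B.e i, B.e j⁆ = 0 := by
  induction hd : j - i using Nat.strong_induction_on generalizing i j with
  | _ d ih =>
    obtain rfl | rfl | hi4 : i = 2 ∨ i = 3 ∨ 4 ≤ i := by omega
    · exact B.adapted2 j (by omega) (by omega)
    · exact B.adapted3 j (by omega) (by omega)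
    obtain rfl | rfl | hij2 : j = i ∨ j = i + 1 ∨ i + 2 ≤ j := by omega
    · exact lie_self _
    · exact h i hi4 hj
    have hjacobi := leibniz_lie (B.e 1) (B.e (i + 1)) (B.e j)
    have hj' : ⁅B.e 1, B.e j⁆ = B.e (j - 1) := B.adapted1 j (by omega) (by omega)
    rw [B.lie_e_one_e_succ hi (by omega), hj',
      ih (d - 1) (by omega) (i := i + 1) (by omega) (by omega) hj (by omega),
      ih (d - 2) (by omega) (i := i + 1) (j := j - 1) (by omega) (by omega) (by omega) (by omega),
      lie_zero, add_zero] at hjacobi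
    exact hjacobi.symm

theorem lie_eq_zero_of_lie_succ_eq_zero {m : ℕ} (hm : m ≤ n + 1)
    (h : ∀ k, 4 ≤ k → k + 1 < m → ⁅B.e k, B.e (k + 1)⁆ = 0) {i j : ℕ} (hi : 2 ≤ i) (hj : 2 ≤ j)
    (him : i < m) (hjm : j < m) : ⁅B.e i, B.e j⁆ = 0 := by
  rcases le_total i j with hij | hji
  · exact B.lie_eq_zero_of_le_of_lie_succ_eq_zero hm h hi hij hjm
  · rw [← lie_skew, B.lie_eq_zero_of_le_of_lie_succ_eq_zero hm h hj hji him, neg_zero]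

theorem exists_lie_succ_ne_zero (h : ∃ i j, 2 ≤ i ∧ i < j ∧ j ≤ n ∧ ⁅B.e i, B.e j⁆ ≠ 0) :
    ∃ k, 4 ≤ k ∧ k + 1 ≤ n ∧ ⁅B.e k, B.e (k + 1)⁆ ≠ 0 := by
  obtain ⟨i, j, hi, hij, hjn, hne⟩ := h
  by_contra! hall
  exact hne (B.lie_eq_zero_of_le_of_lie_succ_eq_zero le_rfl (fun k hk hkn ↦ hall k hk (by omega))
    hi hij.le (by omega))

lemma e_mem_derivedSeries_one {i : ℕ} (hi : 2 ≤ i) (hin : i < n) :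
    B.e i ∈ derivedSeries ℂ L 1 := by
  rw [← B.lie_e_one_e_succ hi hin]
  exact LieSubmodule.lie_mem_lie (LieSubmodule.mem_top _) (LieSubmodule.mem_top _)

lemma linearIndependent_e_add_two : LinearIndependent ℂ fun i : Fin (n - 2) ↦ B.e (i + 2) := by
  have hb : (fun i : Fin (n - 2) ↦ B.e (i + 2)) =
      B.b ∘ fun i : Fin (n - 2) ↦ (⟨i + 1, by omega⟩ : Fin n) :=
    funext fun i ↦ B.he ⟨i + 1, by omega⟩
  rw [hb]
  exact B.b.linearIndependent.comp _ fun i j hij ↦ by simpa [Fin.ext_iff] using hij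

theorem coe_derivedSeries_one_eq_span (hfil : IsFiliform L n) (hn : 2 ≤ n) :
    (derivedSeries ℂ L 1).toSubmodule =
      span ℂ (Set.range fun i : Fin (n - 2) ↦ B.e (i + 2)) := by
  have : FiniteDimensional ℂ L := Module.Finite.of_basis B.b
  refine (eq_of_le_of_finrank_le ?_ ?_).symm
  · rw [span_le]
    rintro _ ⟨i, rfl⟩
    exact B.e_mem_derivedSeries_one (by omega) (by omega)
  · rw [finrank_span_eq_card B.linearIndependent_e_add_two, Fintype.card_fin]
    exact (hfil.2 2 le_rfl hn).le

theorem derivedSeries_two_eq_bot_iff (hfil : IsFiliform L n) (hn : 2 ≤ n) :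
    derivedSeries ℂ L 2 = ⊥ ↔
      ∀ i j, 2 ≤ i → 2 ≤ j → i < n → j < n → ⁅B.e i, B.e j⁆ = 0 := by
  rw [derivedSeries_def, derivedSeriesOfIdeal_succ, LieSubmodule.lie_eq_bot_iff]
  constructor
  · intro h i j hi hj hin hjn
    exact h _ (B.e_mem_derivedSeries_one hi hin) _ (B.e_mem_derivedSeries_one hj hjn)
  · intro h x hx y hy
    rw [← LieSubmodule.mem_toSubmodule, ← derivedSeries_def,
      B.coe_derivedSeries_one_eq_span hfil hn] at hx hy
    induction hx, hy using span_induction₂ with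
    | mem_mem x y hx hy =>
      obtain ⟨i, rfl⟩ := hx
      obtain ⟨j, rfl⟩ := hy
      exact h _ _ (by omega) (by omega) (by omega) (by omega)
    | zero_left => exact zero_lie _
    | zero_right => exact lie_zero _
    | add_left x y z _ _ _ hx hy => rw [add_lie, hx, hy, add_zero]
    | add_right x y z _ _ _ hy hz => rw [lie_add, hy, hz, add_zero]
    | smul_left c x y _ _ hxy => rw [smul_lie, hxy, smul_zero]
    | smul_right c x y _ _ hxy => rw [lie_smul, hxy, smul_zero]

theorem derivedSeries_two_eq_bot_iff_lie_succ (hfil : IsFiliform L n) (hn : 2 ≤ n) :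
    derivedSeries ℂ L 2 = ⊥ ↔ ∀ k, 4 ≤ k → k + 1 < n → ⁅B.e k, B.e (k + 1)⁆ = 0 := by
  rw [B.derivedSeries_two_eq_bot_iff hfil hn]
  exact ⟨fun h k hk hkn ↦ h k (k + 1) (by omega) (by omega) (by omega) hkn,
    fun h i j hi hj hin hjn ↦ B.lie_eq_zero_of_lie_succ_eq_zero (by omega) h hi hj hin hjn⟩

end AdaptedBasis

/-- For an `n`-dimensional non-model filiform Lie algebra with adapted basis `e_1, …, e_n`
and invariant `z_2 = min {k ≥ 4 : ⁅e_k, e_{k+1}⁆ ≠ 0}`, one has `z_2 ≤ n - 1`, and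
`z_2 = n - 1` if and only if `g` is metabelian, i.e. `D^2 g = 0`. -/
theorem z2_le_and_metabelian_iff
    (n : ℕ) (L : Type*) [LieRing L] [LieAlgebra ℂ L]
    (hfil : IsFiliform L n) (B : AdaptedBasis n L)
    (hnonmodel : ∃ i j, 2 ≤ i ∧ i < j ∧ j ≤ n ∧ ⁅B.e i, B.e j⁆ ≠ 0) :
    sInf {k | 4 ≤ k ∧ ⁅B.e k, B.e (k + 1)⁆ ≠ 0} ≤ n - 1 ∧
    (sInf {k | 4 ≤ k ∧ ⁅B.e k, B.e (k + 1)⁆ ≠ 0} = n - 1 ↔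
      LieAlgebra.derivedSeries ℂ L 2 = ⊥) := by
  set S : Set ℕ := {k | 4 ≤ k ∧ ⁅B.e k, B.e (k + 1)⁆ ≠ 0}
  obtain ⟨k₀, hk₀, hk₀n, hne⟩ := B.exists_lie_succ_ne_zero hnonmodel
  have hk₀S : k₀ ∈ S := ⟨hk₀, hne⟩
  have hS : sInf S ≤ n - 1 := (Nat.sInf_le hk₀S).trans (by omega)
  refine ⟨hS, ?_⟩
  rw [B.derivedSeries_two_eq_bot_iff_lie_succ hfil (by omega), ← hS.ge_iff_eq,
    le_csInf_iff' ⟨k₀, hk₀S⟩]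
  refine forall_congr' fun k ↦ ⟨fun h hk hkn ↦ ?_, fun h hkS ↦ ?_⟩
  · by_contra hne
    exact absurd (h ⟨hk, hne⟩) (by omega)
  · by_contra hlt
    exact hkS.2 (h hkS.1 (by omega))
end

section
/- Let g be an n-dimensional non-model filiform Lie algebra whose invariant z_2 equals n − 2. Then n ≥ 6 and g has derived length exactly 3: D^2 g ≠ 0 and D^3 g = 0. -/
/-!
Minimality of `z₂ = n - 2` kills the brackets `⁅e_k, e_{k+1}⁆` for `4 ≤ k < n - 2`, and
adaptedness kills them for `k = 2, 3`. The Jacobi identity with `e₁`,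
`⁅e_i, e_{j+1}⁆ = ⁅e₁, ⁅e_{i+1}, e_{j+1}⁆⁆ - ⁅e_{i+1}, e_j⁆`, propagates this by induction on
`j - i` to all brackets among `e₂, …, e_{n-2}`. By the filiform dimension count these vectors
span `C³g`, which is therefore abelian; as `D²g ⊆ C³g`, we get `D³g = 0`. On the other hand
`e_{n-2}, e_{n-1} ∈ C²g = D¹g`, and their bracket is nonzero by the definition of `z₂`, so
`D²g ≠ 0`.
-/

open LieAlgebra LieModule Submodule

theorem lie_eq_zero_of_mem_span {R L : Type*} [CommRing R] [LieRing L] [LieAlgebra R L]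
    {s : Set L} (hs : ∀ a ∈ s, ∀ b ∈ s, ⁅a, b⁆ = 0) {x y : L}
    (hx : x ∈ span R s) (hy : y ∈ span R s) : ⁅x, y⁆ = 0 := by
  induction hx, hy using span_induction₂ with
  | mem_mem a b ha hb => exact hs a ha b hb
  | zero_left => exact zero_lie _
  | zero_right => exact lie_zero _
  | add_left _ _ _ _ _ _ h₁ h₂ => rw [add_lie, h₁, h₂, add_zero]
  | add_right _ _ _ _ _ _ h₁ h₂ => rw [lie_add, h₁, h₂, add_zero]
  | smul_left _ _ _ _ _ h => rw [smul_lie, h, smul_zero]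
  | smul_right _ _ _ _ _ h => rw [lie_smul, h, smul_zero]

theorem derivedSeries_succ_le_lie_lowerCentralSeries (R L : Type*) [CommRing R] [LieRing L]
    [LieAlgebra R L] (k : ℕ) :
    derivedSeries R L (k + 1) ≤ ⁅lowerCentralSeries R L L k, lowerCentralSeries R L L k⁆ := by
  rw [derivedSeries_def, derivedSeriesOfIdeal_succ, ← derivedSeries_def]
  exact LieSubmodule.mono_lie (derivedSeries_le_lowerCentralSeries R L k)
    (derivedSeries_le_lowerCentralSeries R L k)

namespace AdaptedBasis

variable {n : ℕ} {L : Type*} [LieRing L] [LieAlgebra ℂ L] (B : AdaptedBasis n L)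

theorem lie_e_one_succ {m : ℕ} (hm : 2 ≤ m) (hmn : m + 1 ≤ n) :
    ⁅B.e 1, B.e (m + 1)⁆ = B.e m :=
  B.adapted1 (m + 1) (by omega) hmn

theorem lie_e_succ_eq_sub {i j : ℕ} (hi : 2 ≤ i) (hin : i + 1 ≤ n) (hj : 2 ≤ j) (hjn : j + 1 ≤ n) :
    ⁅B.e i, B.e (j + 1)⁆ = ⁅B.e 1, ⁅B.e (i + 1), B.e (j + 1)⁆⁆ - ⁅B.e (i + 1), B.e j⁆ := by
  rw [leibniz_lie, B.lie_e_one_succ hi hin, B.lie_e_one_succ hj hjn, add_sub_cancel_right]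

theorem lie_e_add_eq_zero_of_consecutive {N : ℕ} (hN : N ≤ n)
    (hcons : ∀ k, 4 ≤ k → k + 1 ≤ N → ⁅B.e k, B.e (k + 1)⁆ = 0) :
    ∀ d i, 2 ≤ i → i + d ≤ N → ⁅B.e i, B.e (i + d)⁆ = 0
  | 0, _, _, _ => lie_self _
  | 1, 2, _, _ => B.adapted2 3 (by omega) (by omega)
  | 1, 3, _, _ => B.adapted3 4 (by omega) (by omega)
  | 1, i + 4, _, hiN => hcons (i + 4) (by omega) hiN
  | d + 2, i, hi, hiN => by
    rw [show i + (d + 2) = i + 1 + d + 1 by omega,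
      B.lie_e_succ_eq_sub hi (by omega) (by omega) (by omega), add_assoc (i + 1),
      lie_e_add_eq_zero_of_consecutive hN hcons (d + 1) (i + 1) (by omega) (by omega),
      lie_e_add_eq_zero_of_consecutive hN hcons d (i + 1) (by omega) (by omega),
      lie_zero, sub_zero]

theorem lie_e_eq_zero_of_consecutive {N : ℕ} (hN : N ≤ n)
    (hcons : ∀ k, 4 ≤ k → k + 1 ≤ N → ⁅B.e k, B.e (k + 1)⁆ = 0)
    {i j : ℕ} (hi : i ∈ Set.Icc 2 N) (hj : j ∈ Set.Icc 2 N) : ⁅B.e i, B.e j⁆ = 0 := by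
  rcases le_total i j with hij | hji
  · obtain ⟨d, rfl⟩ := Nat.exists_eq_add_of_le hij
    exact B.lie_e_add_eq_zero_of_consecutive hN hcons d i hi.1 hj.2
  · obtain ⟨d, rfl⟩ := Nat.exists_eq_add_of_le hji
    rw [← lie_skew, B.lie_e_add_eq_zero_of_consecutive hN hcons d j hj.1 hi.2, neg_zero]

theorem e_mem_lowerCentralSeries_s9 {j m : ℕ} (hm : 2 ≤ m) (hmn : m + j ≤ n) :
    B.e m ∈ lowerCentralSeries ℂ L L j := by
  induction j generalizing m with
  | zero => trivial
  | succ j ih =>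
    rw [lowerCentralSeries_succ, ← B.lie_e_one_succ hm (by omega)]
    exact LieSubmodule.lie_mem_lie trivial (ih (by omega) (by omega))

theorem linearIndepOn_e : LinearIndepOn ℂ B.e (Set.Icc 1 n) := by
  let f : Set.Icc 1 n → Fin n := fun i => ⟨i.1 - 1, by grind⟩
  have hf : Function.Injective f := fun i i' h => by
    simp only [f, Fin.mk.injEq] at h
    grind
  have hef : (fun i : Set.Icc 1 n => B.e i) = B.b ∘ f := funext fun i => by
    rw [Function.comp_apply, ← B.he, show (f i).1 + 1 = i.1 by grind]
  show LinearIndependent ℂ fun i : Set.Icc 1 n => B.e i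
  rw [hef]
  exact B.b.linearIndependent.comp f hf

theorem lowerCentralSeries_eq_span (hfil : IsFiliform L n) {j : ℕ} (hj : 1 ≤ j) (hjn : j < n) :
    (lowerCentralSeries ℂ L L j).toSubmodule = span ℂ (B.e '' Set.Icc 2 (n - j)) := by
  have : FiniteDimensional ℂ L := Module.Finite.of_basis B.b
  symm
  apply eq_of_le_of_finrank_le
  · rw [span_le]
    rintro _ ⟨m, hm, rfl⟩
    exact B.e_mem_lowerCentralSeries_s9 hm.1 (by grind)
  · have hli : LinearIndepOn ℂ B.e (Set.Icc 2 (n - j)) :=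
      B.linearIndepOn_e.mono (Set.Icc_subset_Icc (by omega) (by omega))
    have hdim : Module.finrank ℂ (lowerCentralSeries ℂ L L j).toSubmodule = n - (j + 1) :=
      hfil.2 (j + 1) (by omega) (by omega)
    rw [Set.image_eq_range, finrank_span_eq_card hli, hdim]
    simp only [Nat.card_Icc, Fintype.card_ofFinset]
    omega

theorem lie_lowerCentralSeries_self_eq_bot (hfil : IsFiliform L n) {j : ℕ} (hj : 1 ≤ j)
    (hjn : j < n) (hcons : ∀ k, 4 ≤ k → k + 1 ≤ n - j → ⁅B.e k, B.e (k + 1)⁆ = 0) :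
    ⁅lowerCentralSeries ℂ L L j, lowerCentralSeries ℂ L L j⁆ = ⊥ := by
  rw [LieSubmodule.lie_eq_bot_iff]
  intro x hx y hy
  rw [← LieSubmodule.mem_toSubmodule, B.lowerCentralSeries_eq_span hfil hj hjn] at hx hy
  refine lie_eq_zero_of_mem_span ?_ hx hy
  rintro _ ⟨i, hi, rfl⟩ _ ⟨i', hi', rfl⟩
  exact B.lie_e_eq_zero_of_consecutive (by omega) hcons hi hi'

theorem lie_e_mem_derivedSeries_two {i j : ℕ} (hi : 2 ≤ i) (hin : i + 1 ≤ n) (hj : 2 ≤ j)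
    (hjn : j + 1 ≤ n) : ⁅B.e i, B.e j⁆ ∈ derivedSeries ℂ L 2 := by
  have hD1 : derivedSeries ℂ L 1 = lowerCentralSeries ℂ L L 1 := by
    rw [derivedSeries_def, derivedSeriesOfIdeal_succ, derivedSeriesOfIdeal_zero,
      lowerCentralSeries_succ, lowerCentralSeries_zero]
  rw [derivedSeries_def, derivedSeriesOfIdeal_succ, ← derivedSeries_def, hD1]
  exact LieSubmodule.lie_mem_lie (B.e_mem_lowerCentralSeries_s9 hi hin)
    (B.e_mem_lowerCentralSeries_s9 hj hjn)

end AdaptedBasis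

/-- Let `g` be an `n`-dimensional non-model filiform Lie algebra whose invariant
`z_2 = min {k ≥ 4 : ⁅e_k, e_{k+1}⁆ ≠ 0}` equals `n - 2`.  Then `n ≥ 6` and `g` has
derived length exactly `3`: `D^2 g ≠ 0` and `D^3 g = 0`. -/
theorem derivedLength_three_of_z2_eq
    (n : ℕ) (L : Type*) [LieRing L] [LieAlgebra ℂ L]
    (hfil : IsFiliform L n) (B : AdaptedBasis n L)
    (hnonmodel : ∃ i j, 2 ≤ i ∧ i < j ∧ j ≤ n ∧ ⁅B.e i, B.e j⁆ ≠ 0)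
    (hz2 : sInf {k | 4 ≤ k ∧ ⁅B.e k, B.e (k + 1)⁆ ≠ 0} = n - 2) :
    6 ≤ n ∧ LieAlgebra.derivedSeries ℂ L 2 ≠ ⊥ ∧ LieAlgebra.derivedSeries ℂ L 3 = ⊥ := by
  obtain ⟨a, b, ha, hab, hbn, -⟩ := hnonmodel
  set S := {k | 4 ≤ k ∧ ⁅B.e k, B.e (k + 1)⁆ ≠ 0}
  have hne : S.Nonempty := by
    by_contra h
    rw [Set.not_nonempty_iff_eq_empty.1 h, Nat.sInf_empty] at hz2
    omega
  obtain ⟨hn, hz⟩ : n - 2 ∈ S := hz2 ▸ Nat.sInf_mem hne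
  have hcons : ∀ k, 4 ≤ k → k + 1 ≤ n - 2 → ⁅B.e k, B.e (k + 1)⁆ = 0 := fun k hk hkn =>
    not_not.1 fun h => Nat.notMem_of_lt_sInf (s := S) (by omega) ⟨hk, h⟩
  refine ⟨by omega, fun hbot => hz ?_, ?_⟩
  · have h := B.lie_e_mem_derivedSeries_two (i := n - 2) (j := n - 2 + 1) (by omega) (by omega)
      (by omega) (by omega)
    rwa [hbot, LieSubmodule.mem_bot] at h
  · exact le_bot_iff.1 ((derivedSeries_succ_le_lie_lowerCentralSeries ℂ L 2).trans
      (B.lie_lowerCentralSeries_self_eq_bot hfil (by omega) (by omega) hcons).le)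
end

section
/- Let g be a filiform Lie algebra of dimension n ≥ 5 whose derived algebra D g = [g,g] is abelian. Then there exist a basis {x_1,…,x_n} of g and complex numbers λ_0,…,λ_{n-5} such that [x_1, x_i] = x_{i+1} for 2 ≤ i ≤ n−1, [x_i, x_j] = 0 for 3 ≤ i < j ≤ n, and [x_2, x_i] = Σ_{r=0}^{n-i-2} λ_r x_{i+2+r} for 3 ≤ i ≤ n−2. -/
open LieModule Module

namespace Submodule

variable {K V : Type*} [DivisionRing K] [AddCommGroup V] [Module K V]

theorem le_sup_span_image_Ico {W : ℕ → Submodule K V} {v : ℕ → V} {a b : ℕ} (hab : a ≤ b)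
    (h : ∀ k, a ≤ k → k < b → W k ≤ W (k + 1) ⊔ span K {v k}) :
    W a ≤ W b ⊔ span K (v '' Set.Ico a b) := by
  induction b, hab using Nat.le_induction with
  | base => simp
  | succ b hab ih =>
    have hspan : span K {v b} ⊔ span K (v '' Set.Ico a b) ≤ span K (v '' Set.Ico a (b + 1)) :=
      sup_le (span_singleton_le_iff_mem _ _ |>.mpr <| subset_span ⟨b, ⟨hab, b.lt_succ_self⟩, rfl⟩)
        (span_mono <| Set.image_mono <| Set.Ico_subset_Ico_right b.le_succ)
    calc W a ≤ W b ⊔ span K (v '' Set.Ico a b) := ih fun k hak hkb => h k hak (by omega)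
      _ ≤ W (b + 1) ⊔ span K {v b} ⊔ span K (v '' Set.Ico a b) :=
        sup_le_sup_right (h b hab b.lt_succ_self) _
      _ ≤ W (b + 1) ⊔ span K (v '' Set.Ico a (b + 1)) := by
        rw [sup_assoc]; exact sup_le_sup_left hspan _

theorem sup_span_singleton_eq_of_finrank_le [FiniteDimensional K V] {p q : Submodule K V} {v : V}
    (hpq : p ≤ q) (hvq : v ∈ q) (hvp : v ∉ p) (h : finrank K q ≤ finrank K p + 1) :
    p ⊔ span K {v} = q :=
  eq_of_le_of_finrank_le (sup_le hpq <| span_singleton_le_iff_mem _ _ |>.mpr hvq)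
    (by rwa [finrank_sup_span_singleton hvp])

end Submodule

theorem Set.range_fin_add_one_eq_image_Ico {α : Type*} (x : ℕ → α) (n : ℕ) :
    Set.range (fun i : Fin n => x (i.1 + 1)) = x '' Set.Ico 1 (n + 1) := by
  ext y
  constructor
  · rintro ⟨i, rfl⟩
    exact ⟨i.1 + 1, ⟨by omega, by omega⟩, rfl⟩
  · rintro ⟨k, ⟨hk1, hkn⟩, rfl⟩
    exact ⟨⟨k - 1, by omega⟩, congrArg x (Nat.sub_add_cancel hk1)⟩

namespace LieModule

variable {K L M : Type*} [CommRing K] [LieRing L] [LieAlgebra K L]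
  [AddCommGroup M] [Module K M] [LieRingModule L M]

theorem lie_mem_lowerCentralSeries_succ (x : L) {m : M} {k : ℕ}
    (hm : m ∈ lowerCentralSeries K L M k) : ⁅x, m⁆ ∈ lowerCentralSeries K L M (k + 1) := by
  rw [lowerCentralSeries_succ]
  exact LieSubmodule.lie_mem_lie (LieSubmodule.mem_top x) hm

theorem iterate_lie_mem_lowerCentralSeries (x : L) (m : M) (k : ℕ) :
    (⁅x, ·⁆)^[k] m ∈ lowerCentralSeries K L M k := by
  induction k with
  | zero => exact LieSubmodule.mem_top m
  | succ k ih =>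
    rw [Function.iterate_succ_apply']
    exact lie_mem_lowerCentralSeries_succ x ih

theorem lie_notMem_of_le_sup_span [LieModule K L M] {x : L} {v : M} {k : ℕ}
    (hle : (lowerCentralSeries K L M k).toSubmodule ≤
      (lowerCentralSeries K L M (k + 1)).toSubmodule ⊔ Submodule.span K {v})
    (hy : ∃ y ∈ lowerCentralSeries K L M k, ⁅x, y⁆ ∉ lowerCentralSeries K L M (k + 2)) :
    ⁅x, v⁆ ∉ lowerCentralSeries K L M (k + 2) := by
  obtain ⟨y, hy, hxy⟩ := hy
  obtain ⟨z, hz, w, hw, rfl⟩ := Submodule.mem_sup.mp (hle hy)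
  obtain ⟨t, rfl⟩ := Submodule.mem_span_singleton.mp hw
  intro hxv
  rw [lie_add, lie_smul] at hxy
  exact hxy <| add_mem (lie_mem_lowerCentralSeries_succ x hz) (Submodule.smul_mem _ t hxv)

end LieModule

namespace LieModule

variable {K L M : Type*} [Field K] [Infinite K] [LieRing L] [LieAlgebra K L]
  [AddCommGroup M] [Module K M] [LieRingModule L M] [LieModule K L M]

theorem exists_forall_lie_notMem_lowerCentralSeries_add_two {m : ℕ}
    (h : ∀ k < m, lowerCentralSeries K L M (k + 2) < lowerCentralSeries K L M (k + 1)) :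
    ∃ x : L, ∀ k < m, ∃ y ∈ lowerCentralSeries K L M k,
      ⁅x, y⁆ ∉ lowerCentralSeries K L M (k + 2) := by
  let transporter : Fin m → Submodule K L := fun k =>
    ⨅ y : lowerCentralSeries K L M k, (lowerCentralSeries K L M (k + 2)).toSubmodule.comap
      ((toEnd K L M : L →ₗ[K] Module.End K M).flip y)
  have mem_transporter {x : L} {k : Fin m} : x ∈ transporter k ↔
      ∀ y ∈ lowerCentralSeries K L M k, ⁅x, y⁆ ∈ lowerCentralSeries K L M (k + 2) := by
    simp [transporter, Submodule.mem_iInf]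
  have hproper : ∀ k, transporter k ≠ ⊤ := by
    intro k htop
    refine (h k k.2).not_ge ?_
    rw [lowerCentralSeries_succ, LieSubmodule.lie_le_iff]
    exact fun x _ => mem_transporter.mp (htop ▸ Submodule.mem_top)
  obtain ⟨x, hx⟩ : ∃ x, ∀ k, x ∉ transporter k := by
    by_contra! hcover
    obtain ⟨k, hk⟩ := Subspace.exists_eq_top_of_iUnion_eq_univ (p := transporter)
      (Set.eq_univ_of_forall fun x => Set.mem_iUnion.mpr (hcover x))
    exact hproper k hk
  refine ⟨x, fun k hk => ?_⟩
  simpa [mem_transporter] using hx ⟨k, hk⟩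

end LieModule

namespace LieAlgebra

variable {K L : Type*} [CommRing K] [LieRing L] [LieAlgebra K L] {x y : L}

theorem lie_eq_zero_of_derivedSeries_two_eq_bot (hmeta : derivedSeries K L 2 = ⊥)
    (hx : x ∈ lowerCentralSeries K L L 1) (hy : y ∈ lowerCentralSeries K L L 1) : ⁅x, y⁆ = 0 := by
  have : ⁅x, y⁆ ∈ derivedSeries K L 2 := by
    rw [derivedSeries_def, derivedSeriesOfIdeal_succ]
    exact LieSubmodule.lie_mem_lie hx hy
  rwa [hmeta, LieSubmodule.mem_bot] at this

theorem notMem_lowerCentralSeries_one_of_lie_notMem (h : ⁅x, y⁆ ∉ lowerCentralSeries K L L 2) :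
    x ∉ lowerCentralSeries K L L 1 := fun hx =>
  h <| by simpa using neg_mem (lie_mem_lowerCentralSeries_succ y hx)

theorem notMem_sup_span_of_lie_notMem (h : ⁅x, y⁆ ∉ lowerCentralSeries K L L 2) :
    y ∉ (lowerCentralSeries K L L 1).toSubmodule ⊔ Submodule.span K {x} := fun hy => by
  obtain ⟨z, hz, w, hw, rfl⟩ := Submodule.mem_sup.mp hy
  obtain ⟨t, rfl⟩ := Submodule.mem_span_singleton.mp hw
  rw [lie_add, lie_smul, lie_self, smul_zero, add_zero] at h
  exact h (lie_mem_lowerCentralSeries_succ x hz)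

end LieAlgebra

section AdChain

variable {K L : Type*} [CommRing K] [LieRing L] [LieAlgebra K L] {x₁ x₂ : L}

/-- Indexed from `1`, as in the paper; the value at `0` is junk. -/
def adChain (x₁ x₂ : L) : ℕ → L
  | 0 => 0
  | 1 => x₁
  | k + 2 => (⁅x₁, ·⁆)^[k] x₂

theorem lie_adChain {k : ℕ} (hk : 2 ≤ k) : ⁅x₁, adChain x₁ x₂ k⁆ = adChain x₁ x₂ (k + 1) := by
  obtain ⟨j, rfl⟩ := Nat.exists_eq_add_of_le' hk
  exact (Function.iterate_succ_apply' _ _ _).symm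

theorem adChain_mem_lowerCentralSeries (k : ℕ) :
    adChain x₁ x₂ (k + 2) ∈ lowerCentralSeries K L L k :=
  iterate_lie_mem_lowerCentralSeries x₁ x₂ k

theorem adChain_mem_lowerCentralSeries_one {k : ℕ} (hk : 3 ≤ k) :
    adChain x₁ x₂ k ∈ lowerCentralSeries K L L 1 := by
  obtain ⟨j, rfl⟩ : ∃ j, k = j + 1 + 2 := ⟨k - 3, by omega⟩
  exact antitone_lowerCentralSeries K L L (by omega) (adChain_mem_lowerCentralSeries (j + 1))

theorem adChain_sub_smul (c : K) (k : ℕ) :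
    adChain x₁ (x₂ - c • x₁) (k + 3) = adChain x₁ x₂ (k + 3) := by
  simp only [adChain, Function.iterate_succ_apply, lie_sub, lie_smul, lie_self, smul_zero,
    sub_zero]

theorem lie_adChain_eq_sum (hmeta : LieAlgebra.derivedSeries K L 2 = ⊥) {n : ℕ} (lam : ℕ → K)
    (hzero : adChain x₁ x₂ (n + 1) = 0)
    (h₃ : ⁅x₂, adChain x₁ x₂ 3⁆ =
      ∑ r ∈ Finset.range (n - 3 - 1), lam r • adChain x₁ x₂ (3 + 2 + r))
    {i : ℕ} (hi : 3 ≤ i) (hin : i ≤ n - 2) :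
    ⁅x₂, adChain x₁ x₂ i⁆ = ∑ r ∈ Finset.range (n - i - 1), lam r • adChain x₁ x₂ (i + 2 + r) := by
  induction i, hi using Nat.le_induction with
  | base => exact h₃
  | succ i hi ih =>
    have hcomm : ⁅⁅x₂, x₁⁆, adChain x₁ x₂ i⁆ = 0 :=
      LieAlgebra.lie_eq_zero_of_derivedSeries_two_eq_bot hmeta
        (lie_mem_lowerCentralSeries_succ x₂ (LieSubmodule.mem_top x₁))
        (adChain_mem_lowerCentralSeries_one hi)
    calc ⁅x₂, adChain x₁ x₂ (i + 1)⁆ = ⁅x₁, ⁅x₂, adChain x₁ x₂ i⁆⁆ := by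
          rw [← lie_adChain (by omega), leibniz_lie, hcomm, zero_add]
      _ = ∑ r ∈ Finset.range (n - i - 1), lam r • adChain x₁ x₂ (i + 1 + 2 + r) := by
          rw [ih (by omega), lie_sum]
          refine Finset.sum_congr rfl fun r _ => ?_
          rw [lie_smul, lie_adChain (by omega), add_right_comm i 1 2, add_right_comm (i + 2) 1 r]
      _ = ∑ r ∈ Finset.range (n - (i + 1) - 1), lam r • adChain x₁ x₂ (i + 1 + 2 + r) := by
          rw [show n - i - 1 = n - (i + 1) - 1 + 1 by omega, Finset.sum_range_succ,
            show i + 1 + 2 + (n - (i + 1) - 1) = n + 1 by omega, hzero, smul_zero, add_zero]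

theorem lie_sub_smul_adChain_three {n : ℕ} (hn : 4 ≤ n) {c : ℕ → K}
    (hc : ∑ k ∈ Finset.Ico 4 (n + 1), c k • adChain x₁ x₂ k = ⁅x₂, adChain x₁ x₂ 3⁆) :
    ⁅x₂ - c 4 • x₁, adChain x₁ (x₂ - c 4 • x₁) 3⁆ =
      ∑ r ∈ Finset.range (n - 3 - 1), c (r + 5) • adChain x₁ (x₂ - c 4 • x₁) (3 + 2 + r) := by
  have hx₃ : adChain x₁ (x₂ - c 4 • x₁) 3 = adChain x₁ x₂ 3 := adChain_sub_smul _ 0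
  rw [hx₃, sub_lie, ← hc, smul_lie, lie_adChain (by omega),
    Finset.sum_eq_sum_Ico_succ_bot (by omega), add_sub_cancel_left, Finset.sum_Ico_eq_sum_range]
  refine Finset.sum_congr (by congr 1) fun r _ => ?_
  rw [show 3 + 2 + r = r + 2 + 3 by omega, adChain_sub_smul]

end AdChain

namespace IsFiliform

variable {L : Type*} [LieRing L] [LieAlgebra ℂ L] {n : ℕ}

theorem finiteDimensional (hfil : IsFiliform L n) (hn : 0 < n) : FiniteDimensional ℂ L :=
  Module.finite_of_finrank_pos (hfil.1 ▸ hn)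

theorem finrank_lowerCentralSeries (hfil : IsFiliform L n) {k : ℕ} (hk : 1 ≤ k) (hkn : k < n) :
    finrank ℂ (lowerCentralSeries ℂ L L k).toSubmodule = n - 1 - k := by
  have h := hfil.2 (k + 1) (by omega) (by omega)
  rwa [Nat.add_sub_cancel, show n - (k + 1) = n - 1 - k by omega] at h

theorem lowerCentralSeries_eq_bot_s10 (hfil : IsFiliform L n) (hn : 2 ≤ n) {k : ℕ} (hk : n - 1 ≤ k) :
    lowerCentralSeries ℂ L L k = ⊥ := by
  have := hfil.finiteDimensional (by omega)
  have hzero := hfil.finrank_lowerCentralSeries (k := n - 1) (by omega) (by omega)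
  rw [Nat.sub_self, Submodule.finrank_eq_zero, LieSubmodule.toSubmodule_eq_bot] at hzero
  exact eq_bot_iff.mpr (hzero ▸ antitone_lowerCentralSeries ℂ L L hk)

theorem lowerCentralSeries_lt (hfil : IsFiliform L n) {k : ℕ} (hk : k + 3 ≤ n) :
    lowerCentralSeries ℂ L L (k + 2) < lowerCentralSeries ℂ L L (k + 1) := by
  refine lt_of_le_of_ne (antitone_lowerCentralSeries ℂ L L (by omega)) fun h => ?_
  have h₁ := hfil.finrank_lowerCentralSeries (k := k + 1) (by omega) (by omega)
  have h₂ := hfil.finrank_lowerCentralSeries (k := k + 2) (by omega) (by omega)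
  rw [h] at h₂
  omega

theorem adChain_eq_zero (hfil : IsFiliform L n) (hn : 2 ≤ n) (x₁ x₂ : L) :
    adChain x₁ x₂ (n + 1) = 0 := by
  have := adChain_mem_lowerCentralSeries (K := ℂ) (x₁ := x₁) (x₂ := x₂) (n - 1)
  rwa [hfil.lowerCentralSeries_eq_bot_s10 hn le_rfl, LieSubmodule.mem_bot,
    show n - 1 + 2 = n + 1 by omega] at this

theorem lowerCentralSeries_eq_sup_span_of_notMem (hfil : IsFiliform L n) {k : ℕ} (hk : 1 ≤ k)
    (hkn : k + 2 ≤ n) {v : L} (hv : v ∈ lowerCentralSeries ℂ L L k)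
    (hv' : v ∉ lowerCentralSeries ℂ L L (k + 1)) :
    (lowerCentralSeries ℂ L L k).toSubmodule =
      (lowerCentralSeries ℂ L L (k + 1)).toSubmodule ⊔ Submodule.span ℂ {v} := by
  have := hfil.finiteDimensional (by omega)
  have h₁ := hfil.finrank_lowerCentralSeries hk (by omega)
  have h₂ := hfil.finrank_lowerCentralSeries (k := k + 1) (by omega) (by omega)
  exact (Submodule.sup_span_singleton_eq_of_finrank_le
    (antitone_lowerCentralSeries ℂ L L (k.le_add_right 1)) hv hv' (by omega)).symm

variable {x₁ x₂ : L}

theorem lowerCentralSeries_eq_sup_span_adChain (hfil : IsFiliform L n)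
    (hgen : ∀ k < n - 2, ∃ y ∈ lowerCentralSeries ℂ L L k,
      ⁅x₁, y⁆ ∉ lowerCentralSeries ℂ L L (k + 2))
    (hx₂ : ⁅x₁, x₂⁆ ∉ lowerCentralSeries ℂ L L 2) {k : ℕ} (hk : 1 ≤ k) (hkn : k + 2 ≤ n) :
    (lowerCentralSeries ℂ L L k).toSubmodule =
      (lowerCentralSeries ℂ L L (k + 1)).toSubmodule ⊔
        Submodule.span ℂ {adChain x₁ x₂ (k + 2)} := by
  refine hfil.lowerCentralSeries_eq_sup_span_of_notMem hk hkn
    (adChain_mem_lowerCentralSeries k) ?_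
  induction k, hk using Nat.le_induction with
  | base => exact hx₂
  | succ k hk ih =>
    rw [← lie_adChain (by omega)]
    exact lie_notMem_of_le_sup_span
      (hfil.lowerCentralSeries_eq_sup_span_of_notMem hk (by omega)
        (adChain_mem_lowerCentralSeries k) (ih (by omega))).le
      (hgen k (by omega))

theorem lowerCentralSeries_le_span_adChain (hfil : IsFiliform L n)
    (hgen : ∀ k < n - 2, ∃ y ∈ lowerCentralSeries ℂ L L k,
      ⁅x₁, y⁆ ∉ lowerCentralSeries ℂ L L (k + 2))
    (hx₂ : ⁅x₁, x₂⁆ ∉ lowerCentralSeries ℂ L L 2) {k : ℕ} (hk : 1 ≤ k) (hkn : k ≤ n - 1) :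
    (lowerCentralSeries ℂ L L k).toSubmodule ≤
      Submodule.span ℂ (adChain x₁ x₂ '' Set.Ico (k + 2) (n + 1)) := by
  have h := Submodule.le_sup_span_image_Ico
    (W := fun j => (lowerCentralSeries ℂ L L j).toSubmodule)
    (v := fun j => adChain x₁ x₂ (j + 2)) hkn
    fun j hj hjn => (hfil.lowerCentralSeries_eq_sup_span_adChain hgen hx₂ (by omega) (by omega)).le
  rwa [hfil.lowerCentralSeries_eq_bot_s10 (by omega) le_rfl, LieSubmodule.bot_toSubmodule, bot_sup_eq,
    ← Set.image_image (adChain x₁ x₂) (· + 2), Set.image_add_const_Ico,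
    show n - 1 + 2 = n + 1 by omega] at h

theorem span_adChain_eq_top (hfil : IsFiliform L n) (hn : 3 ≤ n)
    (hgen : ∀ k < n - 2, ∃ y ∈ lowerCentralSeries ℂ L L k,
      ⁅x₁, y⁆ ∉ lowerCentralSeries ℂ L L (k + 2))
    (hx₂ : ⁅x₁, x₂⁆ ∉ lowerCentralSeries ℂ L L 2) :
    Submodule.span ℂ (adChain x₁ x₂ '' Set.Ico 1 (n + 1)) = ⊤ := by
  have := hfil.finiteDimensional (by omega)
  have htop : (lowerCentralSeries ℂ L L 1).toSubmodule ⊔ Submodule.span ℂ {x₁} ⊔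
      Submodule.span ℂ {x₂} = ⊤ := by
    refine Submodule.eq_top_of_finrank_eq ?_
    rw [Submodule.finrank_sup_span_singleton (LieAlgebra.notMem_sup_span_of_lie_notMem hx₂),
      Submodule.finrank_sup_span_singleton
        (LieAlgebra.notMem_lowerCentralSeries_one_of_lie_notMem hx₂),
      hfil.finrank_lowerCentralSeries le_rfl (by omega), hfil.1]
    omega
  have mem (k : ℕ) (hk : k ∈ Set.Ico 1 (n + 1)) :
      adChain x₁ x₂ k ∈ Submodule.span ℂ (adChain x₁ x₂ '' Set.Ico 1 (n + 1)) :=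
    Submodule.subset_span ⟨k, hk, rfl⟩
  rw [eq_top_iff, ← htop]
  refine sup_le (sup_le ?_ ?_) ?_
  · exact (hfil.lowerCentralSeries_le_span_adChain hgen hx₂ le_rfl (by omega)).trans
      (Submodule.span_mono (Set.image_mono (Set.Ico_subset_Ico_left (by omega))))
  · exact (Submodule.span_singleton_le_iff_mem _ _).mpr (mem 1 ⟨le_rfl, by omega⟩)
  · exact (Submodule.span_singleton_le_iff_mem _ _).mpr (mem 2 ⟨by omega, by omega⟩)

end IsFiliform

/-- (Bratzlavsky) Let `g` be a filiform Lie algebra of dimension `n ≥ 5` whose derived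
algebra `D g` is abelian (i.e. `D^2 g = 0`).  Then there exist a basis `x_1, …, x_n` of `g`
and complex numbers `λ_0, …, λ_{n-5}` such that `⁅x_1, x_i⁆ = x_{i+1}` for `2 ≤ i ≤ n-1`,
`⁅x_i, x_j⁆ = 0` for `3 ≤ i < j ≤ n`, and
`⁅x_2, x_i⁆ = ∑_{r=0}^{n-i-2} λ_r x_{i+2+r}` for `3 ≤ i ≤ n-2`. -/
theorem bratzlavsky_normal_form
    (n : ℕ) (L : Type*) [LieRing L] [LieAlgebra ℂ L] (hn : 5 ≤ n)
    (hfil : IsFiliform L n) (hmeta : LieAlgebra.derivedSeries ℂ L 2 = ⊥) :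
    ∃ (x : ℕ → L) (lam : ℕ → ℂ),
      (LinearIndependent ℂ fun i : Fin n => x (i.1 + 1)) ∧
      (Submodule.span ℂ (Set.range fun i : Fin n => x (i.1 + 1)) = ⊤) ∧
      (∀ i, 2 ≤ i → i ≤ n - 1 → ⁅x 1, x i⁆ = x (i + 1)) ∧
      (∀ i j, 3 ≤ i → i < j → j ≤ n → ⁅x i, x j⁆ = 0) ∧
      (∀ i, 3 ≤ i → i ≤ n - 2 →
        ⁅x 2, x i⁆ = ∑ r ∈ Finset.range (n - i - 1), lam r • x (i + 2 + r)) := by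
  have := hfil.finiteDimensional (by omega)
  obtain ⟨x₁, hgen⟩ := exists_forall_lie_notMem_lowerCentralSeries_add_two (K := ℂ) (M := L)
    (m := n - 2) fun k hk => hfil.lowerCentralSeries_lt (by omega)
  obtain ⟨x₂, -, hx₂⟩ := hgen 0 (by omega)
  have hbracket :
      ⁅x₂, adChain x₁ x₂ 3⁆ ∈ Submodule.span ℂ (adChain x₁ x₂ '' ↑(Finset.Ico 4 (n + 1))) := by
    rw [Finset.coe_Ico]
    exact hfil.lowerCentralSeries_le_span_adChain hgen hx₂ (k := 2) (by omega) (by omega)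
      (lie_mem_lowerCentralSeries_succ x₂ (adChain_mem_lowerCentralSeries 1))
  obtain ⟨c, hc⟩ := (Submodule.mem_span_image_finset_iff_exists_fun' ℂ).mp hbracket
  have hx₂' : ⁅x₁, x₂ - c 4 • x₁⁆ ∉ lowerCentralSeries ℂ L L 2 := by
    simpa only [lie_sub, lie_smul, lie_self, smul_zero, sub_zero] using hx₂
  have hspan := hfil.span_adChain_eq_top (by omega) hgen hx₂'
  rw [← Set.range_fin_add_one_eq_image_Ico] at hspan
  refine ⟨adChain x₁ (x₂ - c 4 • x₁), fun r => c (r + 5),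
    linearIndependent_of_top_le_span_of_card_eq_finrank hspan.ge (by simp [hfil.1]), hspan,
    fun i hi _ => lie_adChain hi, fun i j hi hij _ => ?_, fun i hi hin => ?_⟩
  · exact LieAlgebra.lie_eq_zero_of_derivedSeries_two_eq_bot hmeta
      (adChain_mem_lowerCentralSeries_one hi) (adChain_mem_lowerCentralSeries_one (by omega))
  · exact lie_adChain_eq_sum hmeta _ (hfil.adChain_eq_zero (by omega) _ _)
      (lie_sub_smul_adChain_three (by omega) hc) hi hin
end

section
/- Conversely, given n ≥ 5 and any complex numbers λ_0,…,λ_{n-5}, the brackets [x_1, x_i] = x_{i+1} for 2 ≤ i ≤ n−1, [x_i, x_j] = 0 for 3 ≤ i < j ≤ n, and [x_2, x_i] = Σ_{r=0}^{n-i-2} λ_r x_{i+2+r} for 3 ≤ i ≤ n−2 (all other brackets determined by antisymmetry, with terms beyond x_n truncated) define a Lie algebra structure on ℂ^n: the Jacobi identity holds for these structure constants. -/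
/-- The `i`-th basis vector `x_i` (1-indexed) of `ℂ^n`; `x_m = 0` for `m > n` (truncation). -/
def xvec (n i : ℕ) : Fin n → ℂ := fun j => if j.1 + 1 = i then 1 else 0

/-- The Bratzlavsky structure constants on `ℂ^n`: `⁅x_1, x_i⁆ = x_{i+1}` for `2 ≤ i ≤ n`
(with `x_{n+1} = 0`), `⁅x_2, x_i⁆ = ∑_{r=0}^{n-i-2} λ_r x_{i+2+r}` for `3 ≤ i ≤ n`
(terms beyond `x_n` truncated), `⁅x_i, x_j⁆ = 0` for `3 ≤ i < j ≤ n`, extended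
antisymmetrically; `bracketVec n lam i j` is the value `⁅x_i, x_j⁆ ∈ ℂ^n`. -/
noncomputable def bracketVec (n : ℕ) (lam : ℕ → ℂ) (i j : ℕ) : Fin n → ℂ :=
  if i = 1 ∧ 2 ≤ j ∧ j ≤ n then xvec n (j + 1)
  else if j = 1 ∧ 2 ≤ i ∧ i ≤ n then -(xvec n (i + 1))
  else if i = 2 ∧ 3 ≤ j ∧ j ≤ n then ∑ r ∈ Finset.range (n - j - 1), lam r • xvec n (j + 2 + r)
  else if j = 2 ∧ 3 ≤ i ∧ i ≤ n then -(∑ r ∈ Finset.range (n - i - 1), lam r • xvec n (i + 2 + r))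
  else 0

/-- The bilinear extension of the Bratzlavsky structure constants to `ℂ^n`. -/
noncomputable def bracketBil (n : ℕ) (lam : ℕ → ℂ) (u v : Fin n → ℂ) : Fin n → ℂ :=
  ∑ i : Fin n, ∑ j : Fin n, (u i * v j) • bracketVec n lam (i.1 + 1) (j.1 + 1)

/-! ### Auxiliary lemmas -/

lemma xvec_zero (n m : ℕ) (h : m = 0 ∨ n < m) : xvec n m = 0 := by
  funext b
  have hb := b.2
  simp only [xvec, Pi.zero_apply]
  rw [if_neg (by omega)]

lemma bV_1 (n : ℕ) (lam : ℕ → ℂ) (j : ℕ) (h1 : 2 ≤ j) (h2 : j ≤ n) :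
    bracketVec n lam 1 j = xvec n (j + 1) := by
  unfold bracketVec
  rw [if_pos ⟨rfl, h1, h2⟩]

lemma bV_j1 (n : ℕ) (lam : ℕ → ℂ) (i : ℕ) (h1 : 2 ≤ i) (h2 : i ≤ n) :
    bracketVec n lam i 1 = -(xvec n (i + 1)) := by
  unfold bracketVec
  rw [if_neg (by omega), if_pos ⟨rfl, h1, h2⟩]

lemma bV_2 (n : ℕ) (lam : ℕ → ℂ) (j : ℕ) (h1 : 3 ≤ j) (h2 : j ≤ n) :
    bracketVec n lam 2 j = ∑ r ∈ Finset.range (n - j - 1), lam r • xvec n (j + 2 + r) := by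
  unfold bracketVec
  rw [if_neg (by omega), if_neg (by omega), if_pos ⟨rfl, h1, h2⟩]

lemma bV_j2 (n : ℕ) (lam : ℕ → ℂ) (i : ℕ) (h1 : 3 ≤ i) (h2 : i ≤ n) :
    bracketVec n lam i 2 = -(∑ r ∈ Finset.range (n - i - 1), lam r • xvec n (i + 2 + r)) := by
  unfold bracketVec
  rw [if_neg (by omega), if_neg (by omega), if_neg (by omega), if_pos ⟨rfl, h1, h2⟩]

lemma bV_big (n : ℕ) (lam : ℕ → ℂ) (i j : ℕ) (hi1 : i ≠ 1) (hi2 : i ≠ 2)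
    (hj1 : j ≠ 1) (hj2 : j ≠ 2) : bracketVec n lam i j = 0 := by
  unfold bracketVec
  split_ifs <;> first | rfl | omega

lemma bV_out (n : ℕ) (lam : ℕ → ℂ) (i j : ℕ) (h : (i = 0 ∨ n < i) ∨ (j = 0 ∨ n < j)) :
    bracketVec n lam i j = 0 := by
  unfold bracketVec
  split_ifs <;> first | rfl | omega

lemma bV_diag (n : ℕ) (lam : ℕ → ℂ) (a : ℕ) : bracketVec n lam a a = 0 := by
  unfold bracketVec
  split_ifs <;> first | rfl | omega

lemma bV_anti (n : ℕ) (lam : ℕ → ℂ) (i j : ℕ) :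
    bracketVec n lam i j = -(bracketVec n lam j i) := by
  unfold bracketVec
  split_ifs <;> first | rfl | omega | simp | (exfalso; omega)

noncomputable def Lmap (n : ℕ) (lam : ℕ → ℂ) (i : ℕ) (v : Fin n → ℂ) : Fin n → ℂ :=
  ∑ b : Fin n, v b • bracketVec n lam i (b.1 + 1)

lemma Lmap_zero (n : ℕ) (lam : ℕ → ℂ) (i : ℕ) : Lmap n lam i 0 = 0 := by
  unfold Lmap; simp

lemma Lmap_neg (n : ℕ) (lam : ℕ → ℂ) (i : ℕ) (v : Fin n → ℂ) :
    Lmap n lam i (-v) = -Lmap n lam i v := by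
  unfold Lmap
  rw [← Finset.sum_neg_distrib]
  refine Finset.sum_congr rfl fun b _ => ?_
  rw [Pi.neg_apply, neg_smul]

lemma Lmap_smul (n : ℕ) (lam : ℕ → ℂ) (i : ℕ) (c : ℂ) (v : Fin n → ℂ) :
    Lmap n lam i (c • v) = c • Lmap n lam i v := by
  unfold Lmap
  rw [Finset.smul_sum]
  refine Finset.sum_congr rfl fun b _ => ?_
  rw [Pi.smul_apply, smul_eq_mul, mul_smul]

lemma Lmap_sum {ι : Type*} (n : ℕ) (lam : ℕ → ℂ) (i : ℕ) (s : Finset ι) (f : ι → Fin n → ℂ) :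
    Lmap n lam i (∑ r ∈ s, f r) = ∑ r ∈ s, Lmap n lam i (f r) := by
  unfold Lmap
  rw [Finset.sum_comm]
  refine Finset.sum_congr rfl fun b _ => ?_
  rw [Finset.sum_apply, Finset.sum_smul]

lemma Lmap_zero_left (n : ℕ) (lam : ℕ → ℂ) (i : ℕ) (v : Fin n → ℂ) (h : i = 0 ∨ n < i) :
    Lmap n lam i v = 0 := by
  unfold Lmap
  refine Finset.sum_eq_zero fun b _ => ?_
  rw [bV_out n lam i (b.1 + 1) (Or.inl h), smul_zero]

lemma Lmap_xvec (n : ℕ) (lam : ℕ → ℂ) (i m : ℕ) :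
    Lmap n lam i (xvec n m) = bracketVec n lam i m := by
  by_cases h : 1 ≤ m ∧ m ≤ n
  · unfold Lmap
    rw [Finset.sum_eq_single (⟨m - 1, by omega⟩ : Fin n)]
    · simp only [xvec]
      rw [if_pos (show (⟨m - 1, by omega⟩ : Fin n).1 + 1 = m by
        show m - 1 + 1 = m; omega), one_smul]
      show bracketVec n lam i (m - 1 + 1) = bracketVec n lam i m
      rw [Nat.sub_add_cancel h.1]
    · intro b _ hb
      have hb' : b.1 + 1 ≠ m := by
        intro hh
        apply hb
        apply Fin.ext
        show b.1 = m - 1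
        omega
      simp only [xvec]
      rw [if_neg hb', zero_smul]
    · intro h'
      exact absurd (Finset.mem_univ _) h'
  · rw [xvec_zero n m (by omega), Lmap_zero, bV_out n lam i m (Or.inr (by omega))]

/-! ### The Jacobi expression on basis indices -/

noncomputable def Jac (n : ℕ) (lam : ℕ → ℂ) (i j k : ℕ) : Fin n → ℂ :=
  Lmap n lam i (bracketVec n lam j k) + Lmap n lam j (bracketVec n lam k i)
    + Lmap n lam k (bracketVec n lam i j)

lemma Jcyc (n : ℕ) (lam : ℕ → ℂ) (i j k : ℕ) : Jac n lam i j k = Jac n lam j k i := by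
  unfold Jac
  abel

lemma Jswap (n : ℕ) (lam : ℕ → ℂ) (i j k : ℕ) : Jac n lam i j k = -Jac n lam i k j := by
  unfold Jac
  rw [bV_anti n lam k j, bV_anti n lam j i, bV_anti n lam i k, Lmap_neg, Lmap_neg, Lmap_neg]
  abel

lemma Jrep (n : ℕ) (lam : ℕ → ℂ) (a b : ℕ) : Jac n lam a a b = 0 := by
  unfold Jac
  rw [bV_anti n lam b a, Lmap_neg, bV_diag, Lmap_zero]
  abel

lemma J0 (n : ℕ) (lam : ℕ → ℂ) (a b c : ℕ) (ha1 : a ≠ 1) (ha2 : a ≠ 2) (hb1 : b ≠ 1)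
    (hb2 : b ≠ 2) (hc1 : c ≠ 1) (hc2 : c ≠ 2) : Jac n lam a b c = 0 := by
  unfold Jac
  rw [bV_big n lam b c hb1 hb2 hc1 hc2, bV_big n lam c a hc1 hc2 ha1 ha2,
      bV_big n lam a b ha1 ha2 hb1 hb2, Lmap_zero, Lmap_zero, Lmap_zero]
  simp

lemma J1 (n : ℕ) (lam : ℕ → ℂ) (b c : ℕ) (hb1 : b ≠ 1) (hb2 : b ≠ 2) (hc1 : c ≠ 1)
    (hc2 : c ≠ 2) : Jac n lam 1 b c = 0 := by
  unfold Jac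
  rw [bV_big n lam b c hb1 hb2 hc1 hc2, Lmap_zero]
  have h2 : Lmap n lam b (bracketVec n lam c 1) = 0 := by
    by_cases hc : 3 ≤ c ∧ c ≤ n
    · rw [bV_j1 n lam c (by omega) hc.2, Lmap_neg, Lmap_xvec,
        bV_big n lam b (c + 1) hb1 hb2 (by omega) (by omega), neg_zero]
    · rw [bV_out n lam c 1 (Or.inl (by omega)), Lmap_zero]
  have h3 : Lmap n lam c (bracketVec n lam 1 b) = 0 := by
    by_cases hb : 3 ≤ b ∧ b ≤ n
    · rw [bV_1 n lam b (by omega) hb.2, Lmap_xvec,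
        bV_big n lam c (b + 1) hc1 hc2 (by omega) (by omega)]
    · rw [bV_out n lam 1 b (Or.inr (by omega)), Lmap_zero]
  rw [h2, h3]
  simp

lemma J2 (n : ℕ) (lam : ℕ → ℂ) (b c : ℕ) (hb1 : b ≠ 1) (hb2 : b ≠ 2) (hc1 : c ≠ 1)
    (hc2 : c ≠ 2) : Jac n lam 2 b c = 0 := by
  unfold Jac
  rw [bV_big n lam b c hb1 hb2 hc1 hc2, Lmap_zero]
  have h2 : Lmap n lam b (bracketVec n lam c 2) = 0 := by
    by_cases hc : 3 ≤ c ∧ c ≤ n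
    · rw [bV_j2 n lam c hc.1 hc.2, Lmap_neg]
      simp only [Lmap_sum, Lmap_smul, Lmap_xvec]
      have hz : ∀ r ∈ Finset.range (n - c - 1),
          lam r • bracketVec n lam b (c + 2 + r) = 0 := fun r _ => by
        rw [bV_big n lam b (c + 2 + r) hb1 hb2 (by omega) (by omega), smul_zero]
      rw [Finset.sum_eq_zero hz, neg_zero]
    · rw [bV_out n lam c 2 (Or.inl (by omega)), Lmap_zero]
  have h3 : Lmap n lam c (bracketVec n lam 2 b) = 0 := by
    by_cases hb : 3 ≤ b ∧ b ≤ n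
    · rw [bV_2 n lam b hb.1 hb.2]
      simp only [Lmap_sum, Lmap_smul, Lmap_xvec]
      refine Finset.sum_eq_zero fun r _ => ?_
      rw [bV_big n lam c (b + 2 + r) hc1 hc2 (by omega) (by omega), smul_zero]
    · rw [bV_out n lam 2 b (Or.inr (by omega)), Lmap_zero]
  rw [h2, h3]
  simp

lemma J12 (n : ℕ) (lam : ℕ → ℂ) (hn : 5 ≤ n) (c : ℕ) (hc1 : c ≠ 1) (hc2 : c ≠ 2) :
    Jac n lam 1 2 c = 0 := by
  unfold Jac
  have h3 : Lmap n lam c (bracketVec n lam 1 2) = 0 := by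
    rw [bV_1 n lam 2 le_rfl (by omega), Lmap_xvec,
      bV_big n lam c (2 + 1) hc1 hc2 (by omega) (by omega)]
  rw [h3, add_zero]
  by_cases hcn : 3 ≤ c ∧ c ≤ n
  · rw [bV_2 n lam c hcn.1 hcn.2]
    simp only [Lmap_sum, Lmap_smul, Lmap_xvec]
    rcases Nat.lt_or_ge c (n - 1) with hlt | hge
    · -- 3 ≤ c ≤ n - 2
      rw [bV_j1 n lam c (by omega) hcn.2, Lmap_neg, Lmap_xvec,
        bV_2 n lam (c + 1) (by omega) (by omega)]
      have e1 : n - c - 1 = (n - (c + 1) - 1) + 1 := by omega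
      rw [e1, Finset.sum_range_succ, show c + 2 + (n - (c + 1) - 1) = n from by omega,
        bV_1 n lam n (by omega) le_rfl, xvec_zero n (n + 1) (by omega), smul_zero, add_zero]
      have e3 : ∀ r ∈ Finset.range (n - (c + 1) - 1),
          lam r • bracketVec n lam 1 (c + 2 + r) = lam r • xvec n (c + 1 + 2 + r) := by
        intro r hr
        rw [Finset.mem_range] at hr
        rw [bV_1 n lam (c + 2 + r) (by omega) (by omega),
          show c + 2 + r + 1 = c + 1 + 2 + r from by omega]
      rw [Finset.sum_congr rfl e3]
      abel
    · -- c = n - 1 or c = n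
      rw [show n - c - 1 = 0 from by omega, Finset.sum_range_zero, zero_add]
      by_cases hcn' : c = n
      · rw [bV_j1 n lam c (by omega) hcn.2, Lmap_neg, Lmap_xvec,
          bV_out n lam 2 (c + 1) (Or.inr (by omega)), neg_zero]
      · rw [bV_j1 n lam c (by omega) hcn.2, Lmap_neg, Lmap_xvec,
          bV_2 n lam (c + 1) (by omega) (by omega),
          show n - (c + 1) - 1 = 0 from by omega, Finset.sum_range_zero, neg_zero]
  · rw [bV_out n lam 2 c (Or.inr (by omega)), Lmap_zero,
      bV_out n lam c 1 (Or.inl (by omega)), Lmap_zero, add_zero]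

lemma Jac_zero (n : ℕ) (lam : ℕ → ℂ) (hn : 5 ≤ n) (i j k : ℕ) : Jac n lam i j k = 0 := by
  have key : ∀ a b c : ℕ, a < b → b < c → Jac n lam a b c = 0 := by
    intro a b c hab hbc
    by_cases ha0 : a = 0
    · subst ha0
      unfold Jac
      rw [bV_out n lam c 0 (Or.inr (Or.inl rfl)), Lmap_zero,
        bV_out n lam 0 b (Or.inl (Or.inl rfl)), Lmap_zero,
        Lmap_zero_left n lam 0 _ (Or.inl rfl)]
      simp
    by_cases ha1 : a = 1
    · subst ha1
      by_cases hb2 : b = 2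
      · subst hb2
        exact J12 n lam hn c (by omega) (by omega)
      · exact J1 n lam b c (by omega) hb2 (by omega) (by omega)
    by_cases ha2 : a = 2
    · subst ha2
      exact J2 n lam b c (by omega) (by omega) (by omega) (by omega)
    · exact J0 n lam a b c ha1 ha2 (by omega) (by omega) (by omega) (by omega)
  rcases Nat.lt_trichotomy i j with hij | rfl | hij
  · rcases Nat.lt_trichotomy j k with hjk | rfl | hjk
    · exact key i j k hij hjk
    · rw [Jcyc n lam i j j]
      exact Jrep n lam j i
    · rcases Nat.lt_trichotomy i k with hik | rfl | hik
      · rw [Jswap n lam i j k, key i k j hik hjk, neg_zero]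
      · rw [Jcyc n lam i j i, Jcyc n lam j i i]
        exact Jrep n lam i j
      · rw [Jcyc n lam i j k, Jcyc n lam j k i]
        exact key k i j hik hij
  · exact Jrep n lam i k
  · rcases Nat.lt_trichotomy j k with hjk | rfl | hjk
    · rcases Nat.lt_trichotomy i k with hik | rfl | hik
      · rw [Jcyc n lam i j k, Jswap n lam j k i, key j i k hij hik, neg_zero]
      · rw [Jcyc n lam i j i, Jcyc n lam j i i]
        exact Jrep n lam i j
      · rw [Jcyc n lam i j k]
        exact key j k i hjk hik
    · rw [Jcyc n lam i j j]
      exact Jrep n lam j i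
    · rw [Jcyc n lam i j k, Jcyc n lam j k i, Jswap n lam k i j, key k j i hjk hij, neg_zero]

/-! ### Reduction of the Jacobi identity to basis indices -/

lemma bil_Lmap (n : ℕ) (lam : ℕ → ℂ) (u v : Fin n → ℂ) :
    bracketBil n lam u v = ∑ i : Fin n, u i • Lmap n lam (i.1 + 1) v := by
  unfold bracketBil Lmap
  refine Finset.sum_congr rfl fun i _ => ?_
  rw [Finset.smul_sum]
  refine Finset.sum_congr rfl fun j _ => ?_
  rw [mul_smul]

lemma Lmap_bil (n : ℕ) (lam : ℕ → ℂ) (a : ℕ) (v w : Fin n → ℂ) :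
    Lmap n lam a (bracketBil n lam v w)
      = ∑ j : Fin n, ∑ k : Fin n,
          (v j * w k) • Lmap n lam a (bracketVec n lam (j.1 + 1) (k.1 + 1)) := by
  unfold bracketBil
  simp only [Lmap_sum, Lmap_smul]

lemma rot {M : Type*} [AddCommMonoid M] {n : ℕ} (g : Fin n → Fin n → Fin n → M) :
    (∑ j : Fin n, ∑ k : Fin n, ∑ i : Fin n, g i j k)
      = ∑ i : Fin n, ∑ j : Fin n, ∑ k : Fin n, g i j k :=
  calc (∑ j : Fin n, ∑ k : Fin n, ∑ i : Fin n, g i j k)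
      = ∑ j : Fin n, ∑ i : Fin n, ∑ k : Fin n, g i j k :=
        Finset.sum_congr rfl fun j _ => Finset.sum_comm
    _ = ∑ i : Fin n, ∑ j : Fin n, ∑ k : Fin n, g i j k := Finset.sum_comm

lemma rot2 {M : Type*} [AddCommMonoid M] {n : ℕ} (g : Fin n → Fin n → Fin n → M) :
    (∑ k : Fin n, ∑ i : Fin n, ∑ j : Fin n, g i j k)
      = ∑ i : Fin n, ∑ j : Fin n, ∑ k : Fin n, g i j k :=
  calc (∑ k : Fin n, ∑ i : Fin n, ∑ j : Fin n, g i j k)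
      = ∑ i : Fin n, ∑ k : Fin n, ∑ j : Fin n, g i j k := Finset.sum_comm
    _ = ∑ i : Fin n, ∑ j : Fin n, ∑ k : Fin n, g i j k :=
        Finset.sum_congr rfl fun i _ => Finset.sum_comm

/-- Given `n ≥ 5` and complex numbers `λ_0, …, λ_{n-5}`, the Bratzlavsky structure
constants define a Lie algebra structure on `ℂ^n`: the Jacobi identity holds for the
bilinear antisymmetric bracket they determine. -/
theorem bratzlavsky_jacobi (n : ℕ) (hn : 5 ≤ n) (lam : ℕ → ℂ) :
    ∀ u v w : Fin n → ℂ,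
      bracketBil n lam u (bracketBil n lam v w) +
      bracketBil n lam v (bracketBil n lam w u) +
      bracketBil n lam w (bracketBil n lam u v) = 0 := by
  intro u v w
  rw [bil_Lmap n lam u (bracketBil n lam v w), bil_Lmap n lam v (bracketBil n lam w u),
    bil_Lmap n lam w (bracketBil n lam u v)]
  simp only [Lmap_bil, Finset.smul_sum, smul_smul]
  have h2 := rot (fun (i j k : Fin n) =>
    (v j * (w k * u i)) • Lmap n lam (j.1 + 1) (bracketVec n lam (k.1 + 1) (i.1 + 1)))
  have h3 := rot2 (fun (i j k : Fin n) =>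
    (w k * (u i * v j)) • Lmap n lam (k.1 + 1) (bracketVec n lam (i.1 + 1) (j.1 + 1)))
  beta_reduce at h2 h3
  rw [h2, h3]
  simp only [← Finset.sum_add_distrib]
  refine Finset.sum_eq_zero fun i _ => ?_
  refine Finset.sum_eq_zero fun j _ => ?_
  refine Finset.sum_eq_zero fun k _ => ?_
  rw [show v j * (w k * u i) = u i * (v j * w k) from by ring,
    show w k * (u i * v j) = u i * (v j * w k) from by ring,
    ← smul_add, ← smul_add]
  have h := Jac_zero n lam hn (i.1 + 1) (j.1 + 1) (k.1 + 1)
  unfold Jac at h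
  rw [h, smul_zero]
end

section
/- For integers p, q, r with p = 2n − z_1 − 2z_2 − 3, q = n − z_2 − 2, r = n − z_1 − 1, arising from a triple (z_1, z_2, n) satisfying 4 ≤ z_1 ≤ 2(n − z_2) − 4 and z_1 ≤ z_2 ≤ n − 3 ≤ 2z_2 − 5, the constants a_0 = C(p,q) − C(p,q−1) − Σ_{k=0}^{⌊r/2⌋} R_k and c_1 = C(p+1,q+1) − C(p+1,q) − Σ_{k=0}^{⌊r/2⌋} S_k are both strictly negative, where R_k = (C(r,k) − C(r,k−1))·C(q,k) and S_k = (C(r,k) − C(r,k−1))·C(q,k−1). -/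
/-- `R_k = (C(r,k) - C(r,k-1)) · C(q,k)` as an integer, with `C(r,-1) = 0`. -/
def Rconst (r q k : ℕ) : ℤ :=
  ((r.choose k : ℤ) - if k = 0 then 0 else (r.choose (k - 1) : ℤ)) * (q.choose k : ℤ)

/-- `S_k = (C(r,k) - C(r,k-1)) · C(q,k-1)` as an integer, with `C(·,-1) = 0`. -/
def Sconst (r q k : ℕ) : ℤ :=
  ((r.choose k : ℤ) - if k = 0 then 0 else (r.choose (k - 1) : ℤ)) *
    (if k = 0 then 0 else (q.choose (k - 1) : ℤ))

/-- one-step monotonicity of binomial coefficients past the middle -/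
lemma choose_step (p q : ℕ) (h : p ≤ 2 * q + 1) : p.choose (q + 1) ≤ p.choose q := by
  have h1 := Nat.choose_succ_right_eq p q
  have h2 : p.choose (q + 1) * (q + 1) ≤ p.choose q * (q + 1) := by
    rw [h1]
    exact Nat.mul_le_mul_left _ (by omega)
  exact Nat.le_of_mul_le_mul_right h2 (Nat.succ_pos q)

lemma diff_nonneg (r k : ℕ) (hk : k ≤ r / 2) :
    (0 : ℤ) ≤ (r.choose k : ℤ) - if k = 0 then 0 else (r.choose (k - 1) : ℤ) := by
  rcases Nat.eq_zero_or_pos k with h | h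
  · subst h; simp
  · have hlt : k - 1 < r / 2 := by omega
    have := Nat.choose_le_succ_of_lt_half_left hlt
    rw [show k - 1 + 1 = k by omega] at this
    simp only [if_neg (by omega : k ≠ 0)]
    exact sub_nonneg.mpr (by exact_mod_cast this)

lemma R_nonneg (r q k : ℕ) (hk : k ≤ r / 2) : 0 ≤ Rconst r q k :=
  mul_nonneg (diff_nonneg r k hk) (by positivity)

lemma S_nonneg (r q k : ℕ) (hk : k ≤ r / 2) : 0 ≤ Sconst r q k := by
  refine mul_nonneg (diff_nonneg r k hk) ?_
  split <;> positivity

/-- For `p = 2n - z_1 - 2z_2 - 3`, `q = n - z_2 - 2`, `r = n - z_1 - 1` arising from a triple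
`(z_1, z_2, n)` with `4 ≤ z_1 ≤ 2(n - z_2) - 4` and `z_1 ≤ z_2 ≤ n - 3 ≤ 2 z_2 - 5`, the
constants `a_0 = C(p,q) - C(p,q-1) - ∑_{k=0}^{⌊r/2⌋} R_k` and
`c_1 = C(p+1,q+1) - C(p+1,q) - ∑_{k=0}^{⌊r/2⌋} S_k` are both strictly negative. -/
theorem a0_c1_neg (n z1 z2 : ℕ)
    (h1 : 4 ≤ z1) (h2 : z1 ≤ 2 * (n - z2) - 4)
    (h3 : z1 ≤ z2) (h4 : z2 ≤ n - 3) (h5 : n - 3 ≤ 2 * z2 - 5) :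
    (((2 * n - z1 - 2 * z2 - 3).choose (n - z2 - 2) : ℤ) -
        ((2 * n - z1 - 2 * z2 - 3).choose (n - z2 - 3) : ℤ) -
        ∑ k ∈ Finset.range ((n - z1 - 1) / 2 + 1), Rconst (n - z1 - 1) (n - z2 - 2) k < 0) ∧
    (((2 * n - z1 - 2 * z2 - 2).choose (n - z2 - 1) : ℤ) -
        ((2 * n - z1 - 2 * z2 - 2).choose (n - z2 - 2) : ℤ) -
        ∑ k ∈ Finset.range ((n - z1 - 1) / 2 + 1), Sconst (n - z1 - 1) (n - z2 - 2) k < 0) := by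
  set p := 2 * n - z1 - 2 * z2 - 3 with hp
  set q := n - z2 - 2 with hq
  set r := n - z1 - 1 with hr
  have hn : z2 + 4 ≤ n := by omega
  have hq2 : 2 ≤ q := by omega
  have hr3 : 3 ≤ r := by omega
  have hpq : p + 4 ≤ 2 * q + 1 := by omega
  have hq1 : n - z2 - 3 = q - 1 := by omega
  have hp1 : 2 * n - z1 - 2 * z2 - 2 = p + 1 := by omega
  have hq3 : n - z2 - 1 = q + 1 := by omega
  -- binomial monotonicity facts
  have hc1 : p.choose q ≤ p.choose (q - 1) := by
    have := choose_step p (q - 1) (by omega)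
    rwa [show q - 1 + 1 = q by omega] at this
  have hc2 : (p + 1).choose (q + 1) ≤ (p + 1).choose q := choose_step (p + 1) q (by omega)
  -- sum lower bounds
  have hRmem : (0 : ℕ) ∈ Finset.range (r / 2 + 1) := by simp
  have hRsum : Rconst r q 0 ≤ ∑ k ∈ Finset.range (r / 2 + 1), Rconst r q k :=
    Finset.single_le_sum (fun i hi => R_nonneg r q i (by
      simp only [Finset.mem_range] at hi; omega)) hRmem
  have hR0 : Rconst r q 0 = 1 := by simp [Rconst]
  have hSmem : (1 : ℕ) ∈ Finset.range (r / 2 + 1) := by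
    simp only [Finset.mem_range]; omega
  have hSsum : Sconst r q 1 ≤ ∑ k ∈ Finset.range (r / 2 + 1), Sconst r q k :=
    Finset.single_le_sum (fun i hi => S_nonneg r q i (by
      simp only [Finset.mem_range] at hi; omega)) hSmem
  have hS1 : (1 : ℤ) ≤ Sconst r q 1 := by
    simp only [Sconst, Nat.choose_one_right, Nat.choose_zero_right]
    norm_num
    have : (3 : ℤ) ≤ (r : ℤ) := by exact_mod_cast hr3
    linarith
  rw [hq1, hp1, hq3]
  have hcz1 : (p.choose q : ℤ) ≤ (p.choose (q - 1) : ℤ) := by exact_mod_cast hc1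
  have hcz2 : ((p + 1).choose (q + 1) : ℤ) ≤ ((p + 1).choose q : ℤ) := by exact_mod_cast hc2
  constructor <;> linarith
end

section
/- Let g be an n-dimensional non-model filiform Lie algebra in the family F_{αγ} with invariants (z_1, z_2, n), α_1 = 0, and z_2 ≤ n − 3. Then D^2 g is contained in the span of e_2, …, e_{2n − z_1 − z_2 − 2}; in particular, if z_1 > 2(n − z_2) − 4 then D^3 g = 0 and g has derived length at most 3. -/
/-- `P h u` is the coordinate of `u` with respect to the basis vector `e_h` (for
`1 ≤ h ≤ n`; it is `0` for `h` out of range). -/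
noncomputable def AdaptedBasis.P {n : ℕ} {L : Type*} [LieRing L] [LieAlgebra ℂ L]
    (B : AdaptedBasis n L) (h : ℕ) (u : L) : ℂ :=
  if hh : 1 ≤ h ∧ h ≤ n then B.b.repr u ⟨h - 1, by omega⟩ else 0

/-- The general law (Theorem 2.8) of an `n`-dimensional non-model filiform Lie algebra with
invariants `(z_1, z_2, n)`, with respect to a suitable adapted basis `e_1, …, e_n`:

* `⁅e_1, e_h⁆ = e_{h-1}` for `3 ≤ h ≤ n`;
* `⁅e_{z_1+i}, e_{z_2+1}⁆ = α_1 e_{i+2} + α_2 e_{i+1} + ⋯ + α_{i+1} e_2` for `0 ≤ i ≤ z_2-z_1`;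
* `⁅e_{z_1}, e_{z_2+j}⁆ = α_1 e_{j+1} + γ_1 e_j + ⋯ + γ_{j-1} e_2` for `2 ≤ j ≤ n-z_2`;
* `⁅e_{z_1+k}, e_{z_2+ℓ}⁆ = ∑_{h=2}^{k+ℓ} P_h(⁅e_{z_1+k-1}, e_{z_2+ℓ}⁆ + ⁅e_{z_1+k}, e_{z_2+ℓ-1}⁆) e_{h+1} + β_{kℓ} e_2`
  for `2 ≤ ℓ ≤ n-z_2`, `1 ≤ k < z_2-z_1+ℓ`;
* all remaining brackets `⁅e_i, e_j⁆` with `2 ≤ i < j ≤ n` vanish;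

moreover `z_1 = min {k ≥ 4 : ⁅e_k, e_n⁆ ≠ 0}` and `z_2 = min {k ≥ 4 : ⁅e_k, e_{k+1}⁆ ≠ 0}`
(recorded via `hz1ne`, `hz2ne`, `law0`), and `4 ≤ z_1 ≤ z_2 < n ≤ 2 z_2 - 2`. -/
structure GeneralLaw (n : ℕ) (L : Type*) [LieRing L] [LieAlgebra ℂ L]
    extends AdaptedBasis n L where
  z1 : ℕ
  z2 : ℕ
  α : ℕ → ℂ
  γ : ℕ → ℂ
  β : ℕ → ℕ → ℂ
  hz : 4 ≤ z1 ∧ z1 ≤ z2 ∧ z2 < n ∧ n ≤ 2 * z2 - 2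
  hz1ne : ⁅e z1, e n⁆ ≠ 0
  hz2ne : ⁅e z2, e (z2 + 1)⁆ ≠ 0
  law0 : ∀ i j, 2 ≤ i → i < j → j ≤ n → (i < z1 ∨ j ≤ z2) → ⁅e i, e j⁆ = 0
  lawA : ∀ i, i ≤ z2 - z1 →
    ⁅e (z1 + i), e (z2 + 1)⁆ = ∑ t ∈ Finset.range (i + 1), α (t + 1) • e (i + 2 - t)
  lawB : ∀ j, 2 ≤ j → j ≤ n - z2 →
    ⁅e z1, e (z2 + j)⁆ = α 1 • e (j + 1) + ∑ t ∈ Finset.range (j - 1), γ (t + 1) • e (j - t)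
  lawC : ∀ k ℓ, 2 ≤ ℓ → ℓ ≤ n - z2 → 1 ≤ k → k < z2 - z1 + ℓ →
    ⁅e (z1 + k), e (z2 + ℓ)⁆ =
      (∑ h ∈ Finset.Icc 2 (k + ℓ),
        toAdaptedBasis.P h (⁅e (z1 + k - 1), e (z2 + ℓ)⁆ + ⁅e (z1 + k), e (z2 + ℓ - 1)⁆) •
          e (h + 1)) + β k ℓ • e 2

open Submodule Set

section LieSpan

variable {R L : Type*} [CommRing R] [LieRing L] [LieAlgebra R L]

theorem lie_mem_of_mem_span {s t : Set L} {V : Submodule R L}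
    (h : ∀ x ∈ s, ∀ y ∈ t, ⁅x, y⁆ ∈ V) {x y : L} (hx : x ∈ span R s) (hy : y ∈ span R t) :
    ⁅x, y⁆ ∈ V := by
  let f : L →ₗ[R] L →ₗ[R] L := LieModule.toEnd R L L
  have hle : map₂ f (span R s) (span R t) ≤ V := by
    rw [map₂_span_span, span_le]
    rintro _ ⟨x, hx, y, hy, rfl⟩
    exact h x hx y hy
  exact hle (apply_mem_map₂ f hx hy)

theorem lie_mem_of_forall_lt {f : ℕ → L} {V : Submodule R L} {p : ℕ → Prop}
    (h : ∀ a b, p a → p b → a < b → ⁅f a, f b⁆ ∈ V) {a b : ℕ} (ha : p a) (hb : p b) :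
    ⁅f a, f b⁆ ∈ V := by
  rcases lt_trichotomy a b with hab | rfl | hab
  · exact h a b ha hb hab
  · simp
  · rw [← lie_skew]
    exact V.neg_mem (h b a hb ha hab)

theorem LieAlgebra.derivedSeries_succ_le_of_lie_mem {k : ℕ} {s : Set L} {V : Submodule R L}
    (hk : (derivedSeries R L k : Submodule R L) ≤ span R s)
    (h : ∀ x ∈ s, ∀ y ∈ s, ⁅x, y⁆ ∈ V) :
    (derivedSeries R L (k + 1) : Submodule R L) ≤ V := by
  rw [derivedSeries_def, derivedSeriesOfIdeal_succ, ← derivedSeries_def,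
    LieIdeal.toLieSubalgebra_toSubmodule, LieSubmodule.lieIdeal_oper_eq_linear_span', span_le]
  rintro _ ⟨x, hx, y, hy, rfl⟩
  exact lie_mem_of_mem_span h (hk hx) (hk hy)

end LieSpan

theorem Nat.choose_mul_choose_succ_ne {p : ℕ} (q : ℕ) (hp : 1 ≤ p) :
    (p + q - 1).choose p * (p + q).choose (q + 1) ≠ (p + q).choose p * (p + q - 1).choose q := by
  obtain ⟨r, rfl⟩ : ∃ r, p = r + 1 := ⟨p - 1, by omega⟩
  have hA := Nat.choose_mul_succ_eq (r + q) (r + 1)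
  have hB := Nat.choose_mul_succ_eq (r + q) q
  have hB' := Nat.choose_succ_right_eq (r + 1 + q) q
  have hsymm : (r + 1 + q).choose q = (r + 1 + q).choose (r + 1) := by
    rw [Nat.choose_symm_add]
  simp only [show r + 1 + q - 1 = r + q by omega, show r + q + 1 = r + 1 + q by omega,
    show r + 1 + q - (r + 1) = q by omega, show r + 1 + q - q = r + 1 by omega] at *
  set X := (r + 1 + q).choose (r + 1)
  have hX : 0 < X := Nat.choose_pos (by omega)
  intro heq
  have : X * X * (r + 1) * q = X * X * (r + 1) * (q + 1) := by
    calc X * X * (r + 1) * q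
        = ((r + q).choose (r + 1) * (r + 1 + q)) * ((r + 1 + q).choose (q + 1) * (q + 1)) := by
          rw [hA, hB', hsymm]; ring
      _ = ((r + q).choose (r + 1) * (r + 1 + q).choose (q + 1)) * ((r + 1 + q) * (q + 1)) := by
          ring
      _ = X * ((r + q).choose q * (r + 1 + q)) * (q + 1) := by rw [heq]; ring
      _ = X * X * (r + 1) * (q + 1) := by rw [hB, hsymm]; ring
  have hpos : 0 < X * X * (r + 1) := by positivity
  have := Nat.eq_of_mul_eq_mul_left hpos this
  omega

theorem eq_choose_of_pascal {R : Type*} [Semiring R] {f : ℕ → ℕ → R} {a c : R} {K M : ℕ}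
    (hcol : ∀ k, 1 ≤ k → k ≤ K → f k 0 = a) (hrow : ∀ m, 1 ≤ m → m ≤ M → f 0 m = c)
    (hstep : ∀ k m, k < K → m < M → f (k + 1) (m + 1) = f k (m + 1) + f (k + 1) m) :
    ∀ k m, k ≤ K → m ≤ M → 1 ≤ k + m →
      f k m = (k + m - 1).choose m * a + (k + m - 1).choose k * c
  | 0, 0, _, _, h => absurd h (by omega)
  | k + 1, 0, hk, _, _ => by simp [hcol (k + 1) (by omega) hk]
  | 0, m + 1, _, hm, _ => by simp [hrow (m + 1) (by omega) hm]
  | k + 1, m + 1, hk, hm, _ => by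
    rw [hstep k m (by omega) (by omega),
      eq_choose_of_pascal hcol hrow hstep k (m + 1) (by omega) hm (by omega),
      eq_choose_of_pascal hcol hrow hstep (k + 1) m hk (by omega) (by omega),
      show k + 1 + (m + 1) - 1 = k + m + 1 by omega, show k + (m + 1) - 1 = k + m by omega,
      show k + 1 + m - 1 = k + m by omega, Nat.choose_succ_succ, Nat.choose_succ_succ]
    push_cast
    noncomm_ring

theorem eq_zero_of_mul_add_mul_eq_zero {K : Type*} [Field K] {x y A B A' B' : K}
    (hA : A ≠ 0) (hB' : B' ≠ 0) (hdet : A * B' ≠ A' * B)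
    (hx : x * (A * x + B * y) = 0) (hy : y * (A' * x + B' * y) = 0) : x = 0 ∧ y = 0 := by
  by_cases hx0 : x = 0
  · subst hx0
    simp_all
  · have h1 : A * x + B * y = 0 := (mul_eq_zero.mp hx).resolve_left hx0
    by_cases hy0 : y = 0
    · subst hy0
      simp_all
    · have h2 : A' * x + B' * y = 0 := (mul_eq_zero.mp hy).resolve_left hy0
      have : (A * B' - A' * B) * y = 0 := by linear_combination A * h2 - A' * h1
      exact absurd (sub_eq_zero.mp ((mul_eq_zero.mp this).resolve_right hy0)) hdet

namespace AdaptedBasis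

variable {n : ℕ} {L : Type*} [LieRing L] [LieAlgebra ℂ L] (B : AdaptedBasis n L)

/-- `span(e_2, …, e_M)`; for `M ≤ n` this is the term `C^{n-M+1} g` of the lower central series. -/
def lowerSpan (M : ℕ) : Submodule ℂ L := span ℂ (B.e '' Icc 2 M)

theorem e_mem_lowerSpan {j M : ℕ} (h2 : 2 ≤ j) (hM : j ≤ M) : B.e j ∈ B.lowerSpan M :=
  subset_span ⟨j, ⟨h2, hM⟩, rfl⟩

theorem lowerSpan_mono {M M' : ℕ} (h : M ≤ M') : B.lowerSpan M ≤ B.lowerSpan M' :=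
  span_mono (image_mono (Icc_subset_Icc_right h))

theorem e_eq_b {j : ℕ} (h1 : 1 ≤ j) (hn : j ≤ n) : B.e j = B.b ⟨j - 1, by omega⟩ := by
  simpa [Nat.sub_add_cancel h1] using B.he ⟨j - 1, by omega⟩

theorem e_ne_zero {j : ℕ} (h1 : 1 ≤ j) (hn : j ≤ n) : B.e j ≠ 0 := by
  rw [B.e_eq_b h1 hn]
  exact B.b.ne_zero _

theorem P_e (m : ℕ) {j : ℕ} (h1 : 1 ≤ j) (hn : j ≤ n) :
    B.P m (B.e j) = if j = m then 1 else 0 := by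
  unfold P
  split_ifs with hm hjm hjm
  · subst hjm; simp [B.e_eq_b h1 hn]
  · rw [B.e_eq_b h1 hn, B.b.repr_self, Finsupp.single_apply, if_neg]
    simp only [Fin.mk.injEq]; omega
  · omega
  · rfl

theorem P_zero (h : ℕ) : B.P h 0 = 0 := by
  unfold P; split_ifs <;> simp

theorem P_add (h : ℕ) (u v : L) : B.P h (u + v) = B.P h u + B.P h v := by
  unfold P; split_ifs <;> simp

theorem P_smul (h : ℕ) (c : ℂ) (u : L) : B.P h (c • u) = c * B.P h u := by
  unfold P; split_ifs <;> simp

theorem P_sum (h : ℕ) {ι : Type*} (s : Finset ι) (f : ι → L) :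
    B.P h (∑ i ∈ s, f i) = ∑ i ∈ s, B.P h (f i) := by
  unfold P; split_ifs <;> simp

theorem sum_P_smul_e (u : L) : ∑ m ∈ Finset.Icc 1 n, B.P m u • B.e m = u := by
  conv_rhs => rw [← B.b.sum_repr u]
  rw [← Finset.Ico_add_one_right_eq_Icc, Finset.sum_Ico_eq_sum_range, ← Fin.sum_univ_eq_sum_range]
  refine Finset.sum_congr rfl fun i _ => ?_
  simp [P, add_comm 1, B.he]

theorem span_e_Icc_one : span ℂ (B.e '' Icc 1 n) = ⊤ := by
  refine eq_top_iff.mpr fun u _ => ?_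
  rw [← B.sum_P_smul_e u]
  exact sum_mem fun m hm => smul_mem _ _ (subset_span ⟨m, by simpa using hm, rfl⟩)

theorem P_eq_zero_of_mem_lowerSpan {M h : ℕ} (hM : M ≤ n) {u : L} (hu : u ∈ B.lowerSpan M)
    (hh : h ∉ Icc 2 M) : B.P h u = 0 := by
  induction hu using span_induction with
  | mem _ hx =>
    obtain ⟨j, hj, rfl⟩ := hx
    rw [B.P_e h (by grind) (by grind), if_neg (by grind)]
  | zero => exact B.P_zero h
  | add _ _ _ _ hx hy => rw [B.P_add, hx, hy, add_zero]
  | smul _ _ _ hx => rw [B.P_smul, hx, mul_zero]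

theorem mem_lowerSpan_of_P_eq_zero {M : ℕ} {u : L}
    (h : ∀ m ∈ Finset.Icc 1 n, m ∉ Icc 2 M → B.P m u = 0) : u ∈ B.lowerSpan M := by
  rw [← B.sum_P_smul_e u]
  refine sum_mem fun m hm => ?_
  by_cases hmM : m ∈ Icc 2 M
  · exact smul_mem _ _ (subset_span ⟨m, hmM, rfl⟩)
  · rw [h m hm hmM, zero_smul]
    exact zero_mem _

theorem mem_lowerSpan_min {a b : ℕ} (ha : a ≤ n) (hb : b ≤ n) {u : L}
    (hua : u ∈ B.lowerSpan a) (hub : u ∈ B.lowerSpan b) : u ∈ B.lowerSpan (min a b) :=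
  B.mem_lowerSpan_of_P_eq_zero fun m _ hm => by
    rcases le_total a b with hab | hab
    · exact B.P_eq_zero_of_mem_lowerSpan ha hua (by simpa [hab] using hm)
    · exact B.P_eq_zero_of_mem_lowerSpan hb hub (by simpa [hab] using hm)

theorem sum_P_smul_e_succ_mem_lowerSpan {M : ℕ} (hM : M ≤ n) {u : L} (hu : u ∈ B.lowerSpan M)
    (s : Finset ℕ) : ∑ h ∈ s, B.P h u • B.e (h + 1) ∈ B.lowerSpan (M + 1) := by
  refine sum_mem fun h _ => ?_
  by_cases hh : h ∈ Icc 2 M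
  · exact smul_mem _ _ (B.e_mem_lowerSpan (by grind) (by grind))
  · rw [B.P_eq_zero_of_mem_lowerSpan hM hu hh, zero_smul]
    exact zero_mem _

theorem lie_eq_P_smul_of_mem_lowerSpan {M j : ℕ} (hM : M ≤ n) {x u : L}
    (hu : u ∈ B.lowerSpan M) (hx : ∀ m ∈ Icc 2 M, m ≠ j → ⁅x, B.e m⁆ = 0) :
    ⁅x, u⁆ = B.P j u • ⁅x, B.e j⁆ := by
  have hterm : ∀ m ∈ Finset.Icc 1 n, m ≠ j → B.P m u • ⁅x, B.e m⁆ = 0 := by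
    intro m _ hmj
    by_cases hm : m ∈ Icc 2 M
    · rw [hx m hm hmj, smul_zero]
    · rw [B.P_eq_zero_of_mem_lowerSpan hM hu hm, zero_smul]
  conv_lhs => rw [← B.sum_P_smul_e u]
  simp only [lie_sum, lie_smul]
  by_cases hj : j ∈ Finset.Icc 1 n
  · exact Finset.sum_eq_single_of_mem j hj hterm
  · rw [Finset.sum_eq_zero fun m hm => hterm m hm (by grind), B.P_eq_zero_of_mem_lowerSpan hM hu
      (by grind), zero_smul]

theorem lie_e_one_e_mem_lowerSpan {m : ℕ} (hm1 : 1 ≤ m) (hm : m ≤ n) :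
    ⁅B.e 1, B.e m⁆ ∈ B.lowerSpan (n - 1) := by
  rcases (show m = 1 ∨ m = 2 ∨ 3 ≤ m by omega) with rfl | rfl | hm3
  · rw [lie_self]
    exact zero_mem _
  · rw [← lie_skew, B.adapted2 1 le_rfl (by omega), neg_zero]
    exact zero_mem _
  · rw [B.adapted1 m hm3 hm]
    exact B.e_mem_lowerSpan (by omega) (by omega)

theorem lie_e_one_mem_lowerSpan (x : L) : ⁅B.e 1, x⁆ ∈ B.lowerSpan (n - 1) := by
  have hx : x ∈ span ℂ (B.e '' Icc 1 n) := by simp [B.span_e_Icc_one]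
  refine lie_mem_of_mem_span ?_ (subset_span rfl) hx
  rintro _ rfl _ ⟨m, hm, rfl⟩
  exact B.lie_e_one_e_mem_lowerSpan hm.1 hm.2

theorem derivedSeries_one_le_lowerSpan {W : ℕ} (hW : n - 1 ≤ W)
    (h : ∀ a ∈ Icc 2 n, ∀ b ∈ Icc 2 n, ⁅B.e a, B.e b⁆ ∈ B.lowerSpan W) :
    (LieAlgebra.derivedSeries ℂ L 1 : Submodule ℂ L) ≤ B.lowerSpan W := by
  have hbracket : ∀ a ∈ Icc 1 n, ∀ b ∈ Icc 1 n, ⁅B.e a, B.e b⁆ ∈ B.lowerSpan W := by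
    intro a ha b hb
    rcases (show a = 1 ∨ 2 ≤ a by grind) with rfl | ha2
    · exact B.lowerSpan_mono hW (B.lie_e_one_e_mem_lowerSpan hb.1 hb.2)
    rcases (show b = 1 ∨ 2 ≤ b by grind) with rfl | hb2
    · rw [← lie_skew]
      exact neg_mem (B.lowerSpan_mono hW (B.lie_e_one_e_mem_lowerSpan ha.1 ha.2))
    exact h a ⟨ha2, ha.2⟩ b ⟨hb2, hb.2⟩
  exact LieAlgebra.derivedSeries_succ_le_of_lie_mem (k := 0) (s := B.e '' Icc 1 n)
    (by rw [B.span_e_Icc_one]; exact le_top) (by simpa only [forall_mem_image] using hbracket)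

end AdaptedBasis

namespace GeneralLaw

variable {n : ℕ} {L : Type*} [LieRing L] [LieAlgebra ℂ L] (G : GeneralLaw n L)

theorem lie_e_e_eq_zero {a b : ℕ} (ha : a ∈ Icc 2 G.z2) (hb : b ∈ Icc 2 G.z2) :
    ⁅G.e a, G.e b⁆ = 0 := by
  obtain ⟨-, -, hz2n, -⟩ := G.hz
  rw [← mem_bot ℂ]
  refine lie_mem_of_forall_lt (p := (· ∈ Icc 2 G.z2)) (fun a b ha hb hab => ?_) ha hb
  rw [G.law0 a b ha.1 hab (by grind) (Or.inr hb.2)]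
  exact zero_mem _

theorem lie_eq_zero_of_mem_lowerSpan {x y : L} (hx : x ∈ G.lowerSpan G.z2)
    (hy : y ∈ G.lowerSpan G.z2) : ⁅x, y⁆ = 0 := by
  rw [← mem_bot ℂ]
  refine lie_mem_of_mem_span ?_ hx hy
  rintro _ ⟨a, ha, rfl⟩ _ ⟨b, hb, rfl⟩
  rw [G.lie_e_e_eq_zero ha hb]
  exact zero_mem _

theorem derivedSeries_succ_eq_bot {k : ℕ}
    (hk : (LieAlgebra.derivedSeries ℂ L k : Submodule ℂ L) ≤ G.lowerSpan G.z2) :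
    LieAlgebra.derivedSeries ℂ L (k + 1) = ⊥ := by
  rw [← LieSubmodule.toSubmodule_eq_bot, eq_bot_iff]
  refine LieAlgebra.derivedSeries_succ_le_of_lie_mem hk ?_
  rintro _ ⟨a, ha, rfl⟩ _ ⟨b, hb, rfl⟩
  rw [G.lie_e_e_eq_zero ha hb]
  exact zero_mem _

theorem lie_e_z1_add_e_z2_add_one_mem {d k : ℕ} (hα : ∀ t ≤ d, G.α (t + 1) = 0)
    (hk : k ≤ G.z2 - G.z1) : ⁅G.e (G.z1 + k), G.e (G.z2 + 1)⁆ ∈ G.lowerSpan (k + 1 - d) := by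
  rw [G.lawA k hk]
  refine sum_mem fun t ht => ?_
  rw [Finset.mem_range] at ht
  by_cases htd : t ≤ d
  · rw [hα t htd, zero_smul]
    exact zero_mem _
  · exact smul_mem _ _ (G.e_mem_lowerSpan (by omega) (by omega))

theorem lie_e_z1_e_z2_add_mem {d ℓ : ℕ} (hα1 : G.α 1 = 0) (hγ : ∀ t < d, G.γ (t + 1) = 0)
    (hℓ : 2 ≤ ℓ) (hℓn : ℓ ≤ n - G.z2) : ⁅G.e G.z1, G.e (G.z2 + ℓ)⁆ ∈ G.lowerSpan (ℓ - d) := by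
  rw [G.lawB ℓ hℓ hℓn, hα1, zero_smul, zero_add]
  refine sum_mem fun t ht => ?_
  rw [Finset.mem_range] at ht
  by_cases htd : t < d
  · rw [hγ t htd, zero_smul]
    exact zero_mem _
  · exact smul_mem _ _ (G.e_mem_lowerSpan (by omega) (by omega))

theorem lie_e_z1_add_e_z2_add_mem_of_mem {k ℓ M : ℕ} (hℓ : 2 ≤ ℓ) (hℓn : ℓ ≤ n - G.z2)
    (hk : 1 ≤ k) (hkℓ : k < G.z2 - G.z1 + ℓ) (hM : 1 ≤ M) (hMn : M ≤ n)
    (hu : ⁅G.e (G.z1 + k - 1), G.e (G.z2 + ℓ)⁆ + ⁅G.e (G.z1 + k), G.e (G.z2 + ℓ - 1)⁆ ∈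
      G.lowerSpan M) :
    ⁅G.e (G.z1 + k), G.e (G.z2 + ℓ)⁆ ∈ G.lowerSpan (min (M + 1) n) := by
  obtain ⟨hz1, hz12, hz2n, hn2z⟩ := G.hz
  -- `u = ⁅e_1, ⁅e_{z_1+k}, e_{z_2+ℓ}⁆⁆` has no `e_n` component, so the shift `e_h ↦ e_{h+1}`
  -- in law C stays among `e_2, …, e_n`.
  have hu' : ⁅G.e (G.z1 + k - 1), G.e (G.z2 + ℓ)⁆ + ⁅G.e (G.z1 + k), G.e (G.z2 + ℓ - 1)⁆ ∈
      G.lowerSpan (n - 1) := by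
    rw [← G.adapted1 _ (by omega) (by omega), ← G.adapted1 (G.z2 + ℓ) (by omega) (by omega),
      ← leibniz_lie]
    exact G.lie_e_one_mem_lowerSpan _
  have hsum := G.sum_P_smul_e_succ_mem_lowerSpan (by omega)
    (G.mem_lowerSpan_min hMn (Nat.sub_le n 1) hu hu') (Finset.Icc 2 (k + ℓ))
  rw [G.lawC k ℓ hℓ hℓn hk hkℓ]
  exact add_mem (G.lowerSpan_mono (by omega) hsum)
    (smul_mem _ _ (G.e_mem_lowerSpan le_rfl (by omega)))

theorem lie_e_z1_add_e_z2_add_mem {d : ℕ} (hd : d ≤ 1) (hα : ∀ t ≤ d, G.α (t + 1) = 0)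
    (hγ : ∀ t < d, G.γ (t + 1) = 0) (k ℓ : ℕ) (hℓ : 1 ≤ ℓ) (hℓn : ℓ ≤ n - G.z2)
    (hkℓ : G.z1 + k < G.z2 + ℓ) :
    ⁅G.e (G.z1 + k), G.e (G.z2 + ℓ)⁆ ∈ G.lowerSpan (min (k + ℓ - d) n) := by
  obtain ⟨hz1, hz12, hz2n, hn2z⟩ := G.hz
  rcases (show ℓ = 1 ∨ 2 ≤ ℓ by omega) with rfl | hℓ2
  · exact G.lowerSpan_mono (by omega) (G.lie_e_z1_add_e_z2_add_one_mem hα (by omega))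
  rcases Nat.eq_zero_or_pos k with rfl | hk
  · exact G.lowerSpan_mono (by omega)
      (G.lie_e_z1_e_z2_add_mem (hα 0 (Nat.zero_le d)) hγ hℓ2 hℓn)
  have hleft := lie_e_z1_add_e_z2_add_mem hd hα hγ (k - 1) ℓ hℓ hℓn (by omega)
  have hright :
      ⁅G.e (G.z1 + k), G.e (G.z2 + (ℓ - 1))⁆ ∈ G.lowerSpan (min (k + (ℓ - 1) - d) n) := by
    by_cases hdiag : G.z1 + k = G.z2 + (ℓ - 1)
    · rw [hdiag, lie_self]
      exact zero_mem _
    · exact lie_e_z1_add_e_z2_add_mem hd hα hγ k (ℓ - 1) (by omega) (by omega) (by omega)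
  rw [show G.z1 + (k - 1) = G.z1 + k - 1 by omega] at hleft
  rw [show G.z2 + (ℓ - 1) = G.z2 + ℓ - 1 by omega] at hright
  have := G.lie_e_z1_add_e_z2_add_mem_of_mem hℓ2 hℓn hk (by omega) (M := min (k + ℓ - 1 - d) n)
    (by omega) (min_le_right _ _)
    (add_mem (G.lowerSpan_mono (by omega) hleft) (G.lowerSpan_mono (by omega) hright))
  rwa [show min (min (k + ℓ - 1 - d) n + 1) n = min (k + ℓ - d) n by omega] at this
termination_by k + ℓ

theorem lie_e_e_mem_lowerSpan {d C : ℕ} (hd : d ≤ 1) (hα : ∀ t ≤ d, G.α (t + 1) = 0)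
    (hγ : ∀ t < d, G.γ (t + 1) = 0) (hC : C ≤ n) {a b : ℕ} (ha : a ∈ Icc 2 C)
    (hb : b ∈ Icc 2 C) :
    ⁅G.e a, G.e b⁆ ∈ G.lowerSpan (min (2 * C - 1 - G.z1 - G.z2 - d) n) := by
  refine lie_mem_of_forall_lt (p := (· ∈ Icc 2 C)) (fun a b ha hb hab => ?_) ha hb
  by_cases hab0 : a < G.z1 ∨ b ≤ G.z2
  · rw [G.law0 a b ha.1 hab (by grind) hab0]
    exact zero_mem _
  obtain ⟨k, rfl⟩ : ∃ k, a = G.z1 + k := ⟨a - G.z1, by omega⟩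
  obtain ⟨ℓ, rfl⟩ : ∃ ℓ, b = G.z2 + ℓ := ⟨b - G.z2, by omega⟩
  exact G.lowerSpan_mono (by grind)
    (G.lie_e_z1_add_e_z2_add_mem hd hα hγ k ℓ (by omega) (by grind) hab)

theorem derivedSeries_one_le_lowerSpan_n (hα1 : G.α 1 = 0) :
    (LieAlgebra.derivedSeries ℂ L 1 : Submodule ℂ L) ≤ G.lowerSpan n :=
  G.derivedSeries_one_le_lowerSpan (Nat.sub_le n 1) fun _ ha _ hb =>
    G.lowerSpan_mono (min_le_right _ _) (G.lie_e_e_mem_lowerSpan (d := 0) zero_le_one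
      (by simpa using hα1) (by simp) le_rfl ha hb)

theorem derivedSeries_two_le_lowerSpan {d : ℕ} (hd : d ≤ 1) (hα : ∀ t ≤ d, G.α (t + 1) = 0)
    (hγ : ∀ t < d, G.γ (t + 1) = 0) (hn : n ≤ G.z1 + G.z2 + d) :
    (LieAlgebra.derivedSeries ℂ L 2 : Submodule ℂ L) ≤
      G.lowerSpan (2 * n - 3 - G.z1 - G.z2 - d) := by
  have hD1 : (LieAlgebra.derivedSeries ℂ L 1 : Submodule ℂ L) ≤ G.lowerSpan (n - 1) :=
    G.derivedSeries_one_le_lowerSpan le_rfl fun _ ha _ hb =>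
      G.lowerSpan_mono (by omega) (G.lie_e_e_mem_lowerSpan hd hα hγ le_rfl ha hb)
  refine LieAlgebra.derivedSeries_succ_le_of_lie_mem hD1 ?_
  rintro _ ⟨a, ha, rfl⟩ _ ⟨b, hb, rfl⟩
  exact G.lowerSpan_mono (by omega) (G.lie_e_e_mem_lowerSpan hd hα hγ (Nat.sub_le n 1) ha hb)

/-- When `α_1 = 0`, `e_{k+ℓ}` is the highest basis vector that can occur in
`⁅e_{z_1+k}, e_{z_2+ℓ}⁆`. -/
noncomputable def topCoeff (k ℓ : ℕ) : ℂ := G.P (k + ℓ) ⁅G.e (G.z1 + k), G.e (G.z2 + ℓ)⁆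

theorem topCoeff_one {k : ℕ} (hk : 1 ≤ k) (hkS : k ≤ G.z2 - G.z1) : G.topCoeff k 1 = G.α 2 := by
  obtain ⟨hz1, hz12, hz2n, hn2z⟩ := G.hz
  rw [topCoeff, G.lawA k hkS, G.P_sum,
    Finset.sum_eq_single_of_mem 1 (Finset.mem_range.mpr (by omega))]
  · rw [G.P_smul, G.P_e _ (by omega) (by omega), if_pos (by omega), mul_one]
  · intro t ht ht1
    rw [Finset.mem_range] at ht
    rw [G.P_smul, G.P_e _ (by omega) (by omega), if_neg (by omega), mul_zero]

theorem topCoeff_zero {ℓ : ℕ} (hℓ : 2 ≤ ℓ) (hℓn : ℓ ≤ n - G.z2) : G.topCoeff 0 ℓ = G.γ 1 := by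
  obtain ⟨hz1, hz12, hz2n, hn2z⟩ := G.hz
  rw [topCoeff, add_zero, zero_add, G.lawB ℓ hℓ hℓn, G.P_add, G.P_smul,
    G.P_e _ (by omega) (by omega), if_neg (by omega), mul_zero, zero_add, G.P_sum,
    Finset.sum_eq_single_of_mem 0 (Finset.mem_range.mpr (by omega))]
  · rw [G.P_smul, G.P_e _ (by omega) (by omega), if_pos (by omega), mul_one]
  · intro t ht ht0
    rw [Finset.mem_range] at ht
    rw [G.P_smul, G.P_e _ (by omega) (by omega), if_neg (by omega), mul_zero]

theorem topCoeff_eq_add {k ℓ : ℕ} (hk : 1 ≤ k) (hℓ : 2 ≤ ℓ) (hℓn : ℓ ≤ n - G.z2)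
    (hkℓ : k < G.z2 - G.z1 + ℓ) (hkℓn : k + ℓ < n) :
    G.topCoeff k ℓ = G.topCoeff (k - 1) ℓ + G.topCoeff k (ℓ - 1) := by
  obtain ⟨hz1, hz12, hz2n, hn2z⟩ := G.hz
  rw [topCoeff, G.lawC k ℓ hℓ hℓn hk hkℓ, G.P_add, G.P_smul, G.P_e _ (by omega) (by omega),
    if_neg (by omega), mul_zero, add_zero, G.P_sum,
    Finset.sum_eq_single_of_mem (k + ℓ - 1) (Finset.mem_Icc.mpr ⟨by omega, by omega⟩)]
  · rw [G.P_smul, G.P_e _ (by omega) (by omega), if_pos (by omega), mul_one, G.P_add, topCoeff,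
      topCoeff, show G.z1 + (k - 1) = G.z1 + k - 1 by omega, show k - 1 + ℓ = k + ℓ - 1 by omega,
      show G.z2 + (ℓ - 1) = G.z2 + ℓ - 1 by omega, show k + (ℓ - 1) = k + ℓ - 1 by omega]
  · intro h hh hne
    rw [Finset.mem_Icc] at hh
    rw [G.P_smul, G.P_e _ (by omega) (by omega), if_neg (by omega), mul_zero]

/-- The top coefficients obey Pascal's rule; in the column `k = z_2 - z_1 + 1` the law starts from
`topCoeff k 1 = 0` instead of `α_2`, which the shift by `α_2` compensates. -/
theorem topCoeff_add_ite_eq {k m : ℕ} (hk : k ≤ G.z2 - G.z1 + 1) (hm : m ≤ n - G.z2 - 1)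
    (hkm : 1 ≤ k + m) :
    G.topCoeff k (m + 1) + (if k = G.z2 - G.z1 + 1 then G.α 2 else 0) =
      (k + m - 1).choose m * G.α 2 + (k + m - 1).choose k * G.γ 1 := by
  obtain ⟨hz1, hz12, hz2n, hn2z⟩ := G.hz
  refine eq_choose_of_pascal (f := fun k m => G.topCoeff k (m + 1) +
    (if k = G.z2 - G.z1 + 1 then G.α 2 else 0)) ?_ ?_ ?_ k m hk hm hkm
  · intro k hk1 hk
    rcases hk.lt_or_eq with hk | rfl
    · simp [G.topCoeff_one hk1 (by omega), show k ≠ G.z2 - G.z1 + 1 by omega]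
    · simp [topCoeff, show G.z1 + (G.z2 - G.z1 + 1) = G.z2 + 1 by omega, AdaptedBasis.P_zero]
  · intro m hm1 hm
    simp [G.topCoeff_zero (ℓ := m + 1) (by omega) (by omega)]
  · intro k m hk hm
    simp only [G.topCoeff_eq_add (k := k + 1) (ℓ := m + 1 + 1) (by omega) (by omega) (by omega)
      (by omega) (by omega), if_neg (show k ≠ G.z2 - G.z1 + 1 by omega), add_zero,
      Nat.add_sub_cancel]
    ring

theorem lie_e_z1_e_z2_add_one (hα1 : G.α 1 = 0) : ⁅G.e G.z1, G.e (G.z2 + 1)⁆ = 0 := by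
  simpa [hα1] using G.lawA 0 (Nat.zero_le _)

theorem lie_e_z1_add_one_e_z2_add_one (hα1 : G.α 1 = 0) (hS : 1 ≤ G.z2 - G.z1) :
    ⁅G.e (G.z1 + 1), G.e (G.z2 + 1)⁆ = G.α 2 • G.e 2 := by
  simpa [Finset.sum_range_succ, hα1] using G.lawA 1 hS

theorem lie_e_z1_e_z2_add_two (hα1 : G.α 1 = 0) (h : 2 ≤ n - G.z2) :
    ⁅G.e G.z1, G.e (G.z2 + 2)⁆ = G.γ 1 • G.e 2 := by
  simpa [hα1] using G.lawB 2 le_rfl h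

theorem alpha_two_mul_topCoeff_eq_zero (hα1 : G.α 1 = 0) (hn : n = G.z1 + G.z2 + 1) :
    G.α 2 * G.topCoeff (G.z2 - G.z1) (G.z1 + 1) = 0 := by
  obtain ⟨hz1, hz12, hz2n, hn2z⟩ := G.hz
  have hα : ∀ t ≤ 0, G.α (t + 1) = 0 := by simpa using hα1
  have hγ : ∀ t < 0, G.γ (t + 1) = 0 := by simp
  have hw : ⁅G.e G.z2, G.e n⁆ ∈ G.lowerSpan (G.z2 + 1) := by
    convert G.lie_e_z1_add_e_z2_add_mem zero_le_one hα hγ (G.z2 - G.z1) (G.z1 + 1) (by omega)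
      (by omega) (by omega) using 3 <;> omega
  have hv : ⁅G.e (G.z1 + 1), G.e n⁆ ∈ G.lowerSpan (G.z1 + 2) := by
    convert G.lie_e_z1_add_e_z2_add_mem zero_le_one hα hγ 1 (G.z1 + 1) (by omega) (by omega)
      (by omega) using 3 <;> omega
  have hjac : ⁅G.e (G.z1 + 1), ⁅G.e G.z2, G.e n⁆⁆ = 0 := by
    rw [leibniz_lie, G.lie_e_e_eq_zero ⟨by omega, by omega⟩ ⟨by omega, le_rfl⟩, zero_lie, zero_add]
    exact G.lie_eq_zero_of_mem_lowerSpan (G.e_mem_lowerSpan (by omega) le_rfl)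
      (G.lowerSpan_mono (by omega) hv)
  rw [G.lie_eq_P_smul_of_mem_lowerSpan (j := G.z2 + 1) (by omega) hw,
    G.lie_e_z1_add_one_e_z2_add_one hα1 (by omega), smul_smul, ← zero_smul ℂ (G.e 2)] at hjac
  · rw [topCoeff, show G.z1 + (G.z2 - G.z1) = G.z2 by omega, show G.z2 + (G.z1 + 1) = n by omega,
      show G.z2 - G.z1 + (G.z1 + 1) = G.z2 + 1 by omega, mul_comm]
    exact smul_left_injective ℂ (G.e_ne_zero (by omega) (by omega)) hjac
  · intro m hm hmj
    exact G.lie_e_e_eq_zero ⟨by omega, by omega⟩ ⟨hm.1, by grind⟩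

theorem gamma_one_mul_topCoeff_add_eq_zero (hα1 : G.α 1 = 0) (hn : n = G.z1 + G.z2 + 1) :
    G.γ 1 * (G.topCoeff (G.z2 - G.z1 + 1) (G.z1 + 1) + G.α 2) = 0 := by
  obtain ⟨hz1, hz12, hz2n, hn2z⟩ := G.hz
  have hα : ∀ t ≤ 0, G.α (t + 1) = 0 := by simpa using hα1
  have hγ : ∀ t < 0, G.γ (t + 1) = 0 := by simp
  have hw : ⁅G.e (G.z2 + 1), G.e n⁆ ∈ G.lowerSpan (G.z2 + 2) := by
    convert G.lie_e_z1_add_e_z2_add_mem zero_le_one hα hγ (G.z2 - G.z1 + 1) (G.z1 + 1) (by omega)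
      (by omega) (by omega) using 3 <;> omega
  have hv : ⁅G.e G.z1, G.e n⁆ ∈ G.lowerSpan (G.z1 + 1) := by
    convert G.lie_e_z1_add_e_z2_add_mem zero_le_one hα hγ 0 (G.z1 + 1) (by omega) (by omega)
      (by omega) using 3 <;> omega
  have hinner : ⁅G.e (G.z2 + 1), ⁅G.e G.z1, G.e n⁆⁆ = -(G.γ 1 * G.α 2) • G.e 2 := by
    rw [G.lie_eq_P_smul_of_mem_lowerSpan (j := G.z1 + 1) (by omega) hv,
      ← lie_skew (G.e (G.z2 + 1)),
      G.lie_e_z1_add_one_e_z2_add_one hα1 (by omega), smul_neg, smul_smul, neg_smul]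
    · congr 3
      simpa [topCoeff, show G.z2 + (G.z1 + 1) = n by omega] using
        G.topCoeff_zero (ℓ := G.z1 + 1) (by omega) (by omega)
    · intro m hm hmj
      rw [← lie_skew, neg_eq_zero]
      rcases (show m < G.z1 ∨ m = G.z1 by grind) with hm' | rfl
      · exact G.law0 m (G.z2 + 1) hm.1 (by omega) (by omega) (Or.inl hm')
      · exact G.lie_e_z1_e_z2_add_one hα1
  have hjac := leibniz_lie (G.e G.z1) (G.e (G.z2 + 1)) (G.e n)
  rw [G.lie_e_z1_e_z2_add_one hα1, zero_lie, zero_add, hinner,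
    G.lie_eq_P_smul_of_mem_lowerSpan (j := G.z2 + 2) (by omega) hw,
    G.lie_e_z1_e_z2_add_two hα1 (by omega), smul_smul] at hjac
  · have := smul_left_injective ℂ (G.e_ne_zero (by omega) (by omega)) hjac
    rw [topCoeff, show G.z1 + (G.z2 - G.z1 + 1) = G.z2 + 1 by omega,
      show G.z2 + (G.z1 + 1) = n by omega, show G.z2 - G.z1 + 1 + (G.z1 + 1) = G.z2 + 2 by omega]
    linear_combination this
  · intro m hm hmj
    rcases (show m ≤ G.z2 ∨ m = G.z2 + 1 by grind) with hm' | rfl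
    · exact G.lie_e_e_eq_zero ⟨by omega, hz12⟩ ⟨hm.1, hm'⟩
    · exact G.lie_e_z1_e_z2_add_one hα1

theorem alpha_two_eq_zero_and_gamma_one_eq_zero (hα1 : G.α 1 = 0) (hn : n = G.z1 + G.z2 + 1) :
    G.α 2 = 0 ∧ G.γ 1 = 0 := by
  obtain ⟨hz1, hz12, hz2n, hn2z⟩ := G.hz
  have hR := G.alpha_two_mul_topCoeff_eq_zero hα1 hn
  have hT := G.gamma_one_mul_topCoeff_add_eq_zero hα1 hn
  have hS := G.topCoeff_add_ite_eq (k := G.z2 - G.z1) (m := G.z1) (by omega) (by omega) (by omega)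
  have hS1 := G.topCoeff_add_ite_eq (k := G.z2 - G.z1 + 1) (m := G.z1) le_rfl (by omega) (by omega)
  rw [if_neg (by omega), add_zero] at hS
  rw [if_pos rfl] at hS1
  rw [hS, show G.z2 - G.z1 + G.z1 - 1 = G.z2 - 1 by omega] at hR
  rw [hS1, show G.z2 - G.z1 + 1 + G.z1 - 1 = G.z2 by omega] at hT
  have hdet := Nat.choose_mul_choose_succ_ne (p := G.z1) (G.z2 - G.z1) (by omega)
  rw [show G.z1 + (G.z2 - G.z1) = G.z2 by omega] at hdet
  refine eq_zero_of_mul_add_mul_eq_zero ?_ ?_ (by exact_mod_cast hdet) hR hT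
  · exact Nat.cast_ne_zero.mpr (Nat.choose_pos (by omega)).ne'
  · exact Nat.cast_ne_zero.mpr (Nat.choose_pos (by omega)).ne'

end GeneralLaw

theorem derived_two_le_span_general
    (n : ℕ) (L : Type*) [LieRing L] [LieAlgebra ℂ L]
    (G : GeneralLaw n L)
    (hα1 : G.α 1 = 0) :
    (LieAlgebra.derivedSeries ℂ L 2 : Submodule ℂ L) ≤
      Submodule.span ℂ (G.e '' Set.Icc 2 (2 * n - G.z1 - G.z2 - 2)) ∧
    (2 * (n - G.z2) - 4 < G.z1 → LieAlgebra.derivedSeries ℂ L 3 = ⊥) := by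
  obtain ⟨hz1, hz12, hz2n, hn2z⟩ := G.hz
  have hα₀ : ∀ t ≤ 0, G.α (t + 1) = 0 := by simpa using hα1
  have hγ₀ : ∀ t < 0, G.γ (t + 1) = 0 := by simp
  refine ⟨?_, fun h => G.derivedSeries_succ_eq_bot (k := 2) ((G.derivedSeries_two_le_lowerSpan
    zero_le_one hα₀ hγ₀ (by omega)).trans (G.lowerSpan_mono (by omega)))⟩
  change _ ≤ G.lowerSpan _
  rcases (show G.z1 + G.z2 + 2 ≤ n ∨ n = G.z1 + G.z2 + 1 ∨ n ≤ G.z1 + G.z2 by omega)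
    with hlarge | hn | hsmall
  · calc (LieAlgebra.derivedSeries ℂ L 2 : Submodule ℂ L)
        ≤ LieAlgebra.derivedSeries ℂ L 1 :=
          LieAlgebra.derivedSeriesOfIdeal_succ_le ⊤ 1
      _ ≤ G.lowerSpan n := G.derivedSeries_one_le_lowerSpan_n hα1
      _ ≤ G.lowerSpan (2 * n - G.z1 - G.z2 - 2) := G.lowerSpan_mono (by omega)
  · obtain ⟨hα2, hγ1⟩ := G.alpha_two_eq_zero_and_gamma_one_eq_zero hα1 hn
    have hα : ∀ t ≤ 1, G.α (t + 1) = 0 := fun t ht => by interval_cases t <;> assumption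
    have hγ : ∀ t < 1, G.γ (t + 1) = 0 := fun t ht => by interval_cases t; assumption
    exact (G.derivedSeries_two_le_lowerSpan le_rfl hα hγ (by omega)).trans
      (G.lowerSpan_mono (by omega))
  · exact (G.derivedSeries_two_le_lowerSpan zero_le_one hα₀ hγ₀ hsmall).trans
      (G.lowerSpan_mono (by omega))

/-- Let `g` be an `n`-dimensional non-model filiform Lie algebra in the family `F_{αγ}`
(i.e. with general law subject to `β_{kℓ} = γ_{k+ℓ-1}` for `k + ℓ ≤ n - z_2`), with
`α_1 = 0` and `z_2 ≤ n - 3`.  Then `D^2 g ⊆ span(e_2, …, e_{2n - z_1 - z_2 - 2})`; in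
particular, if `z_1 > 2(n - z_2) - 4` then `D^3 g = 0` and `g` has derived length at
most `3`. -/
theorem derived_two_le_span
    (n : ℕ) (L : Type*) [LieRing L] [LieAlgebra ℂ L]
    (G : GeneralLaw n L)
    (hFαγ : ∀ k ℓ, 1 ≤ k → 2 ≤ ℓ → k + ℓ ≤ n - G.z2 → G.β k ℓ = G.γ (k + ℓ - 1))
    (hα1 : G.α 1 = 0) (hz2 : G.z2 ≤ n - 3) :
    (LieAlgebra.derivedSeries ℂ L 2 : Submodule ℂ L) ≤
      Submodule.span ℂ (G.e '' Set.Icc 2 (2 * n - G.z1 - G.z2 - 2)) ∧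
    (2 * (n - G.z2) - 4 < G.z1 → LieAlgebra.derivedSeries ℂ L 3 = ⊥) :=
  derived_two_le_span_general n L G hα1
end
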